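/- arXiv:2009.03151 — 8 statements merged into one kernel-verified Lean document; each statement's English description precedes it below -/
import Mathlib

section
/- Under the conditional parallel trend assumption, almost surely 𝔼[ρ₀·ΔY | 𝔪] = 𝔼[D·(ΔY₁ − ΔY₀) | 𝔪]/π = τ₀; that is, the Abadie weighted estimand identifies the conditional average treatment effect on the treated. -/
open MeasureTheory

/-- Extract the ambient measurable space from a measure. -/
abbrev ambientMS {Ω : Type*} {mΩ : MeasurableSpace Ω} (_ : Measure Ω) : MeasurableSpace Ω := mΩ

/-- Integrability of a measurable function bounded a.e. on a probability space. -/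
lemma integrable_of_ae_bound {Ω : Type*} {mΩ : MeasurableSpace Ω} {μ : Measure Ω}
    [IsProbabilityMeasure μ] {f : Ω → ℝ} (hf : AEStronglyMeasurable f μ) {M : ℝ}
    (hM : ∀ᵐ ω ∂μ, |f ω| ≤ M) : Integrable f μ :=
  Integrable.mono' (integrable_const M) hf hM

/-- Under the conditional parallel trend assumption, the Abadie weighted estimand
identifies the conditional average treatment effect on the treated:
`𝔼[ρ₀·ΔY | 𝔪] = 𝔼[D·(ΔY₁ − ΔY₀) | 𝔪]/π = τ₀` almost surely. -/
theorem abadie_identifies_catt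
    {Ω 𝒲 : Type*} (m : MeasurableSpace Ω) [MeasurableSpace Ω] [m𝒲 : MeasurableSpace 𝒲]
    (μ : Measure Ω) [IsProbabilityMeasure μ]
    (W : Ω → 𝒲) (hW : Measurable W)
    (hmW : m = MeasurableSpace.comap W m𝒲)
    (hm : m ≤ ‹MeasurableSpace Ω›)
    (D : Ω → ℝ) (hD : Measurable D) (hD01 : ∀ ω, D ω = 0 ∨ D ω = 1)
    (ΔY₁ ΔY₀ : Ω → ℝ) (hY₁ : Measurable ΔY₁) (hY₀ : Measurable ΔY₀)
    (C : ℝ) (hbdd₁ : ∀ ω, |ΔY₁ ω| ≤ C) (hbdd₀ : ∀ ω, |ΔY₀ ω| ≤ C)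
    (ΔY : Ω → ℝ) (hΔY : ∀ ω, ΔY ω = D ω * ΔY₁ ω + (1 - D ω) * ΔY₀ ω)
    (c : ℝ) (hc0 : 0 < c) (hc2 : c < 1 / 2)
    (π : Ω → ℝ) (hπmeas : Measurable[m] π)
    (hπ : π =ᵐ[μ] μ[D | m])
    (hπc : ∀ᵐ ω ∂μ, c ≤ π ω ∧ π ω ≤ 1 - c)
    (ρ₀ : Ω → ℝ) (hρ₀ : ∀ ω, ρ₀ ω = (D ω - π ω) / (π ω * (1 - π ω)))
    -- conditional parallel trend assumption
    (hPT : (fun ω => (μ[fun ω' => D ω' * ΔY₀ ω' | m]) ω * (1 - π ω)) =ᵐ[μ]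
      fun ω => (μ[fun ω' => (1 - D ω') * ΔY₀ ω' | m]) ω * π ω)
    -- conditional ATT
    (τ₀ : Ω → ℝ)
    (hτ₀ : τ₀ = fun ω => (μ[fun ω' => D ω' * (ΔY₁ ω' - ΔY₀ ω') | m]) ω / π ω) :
    μ[fun ω => ρ₀ ω * ΔY ω | m] =ᵐ[μ] τ₀ := by
  by_cases hle : m ≤ ambientMS μ
  case neg =>
    rw [condExp_of_not_le hle, hτ₀]
    refine Filter.EventuallyEq.of_eq ?_
    funext ω
    rw [condExp_of_not_le hle]
    simp
  have hπm := hπmeas.mono hle le_rfl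
  have hDm := hD
  have hY₁m := hY₁
  have hY₀m := hY₀
  have hDbd : ∀ ω, |D ω| ≤ 1 := by
    intro ω; rcases hD01 ω with h | h <;> simp [h]
  have hDbd' : ∀ ω, |1 - D ω| ≤ 1 := by
    intro ω; rcases hD01 ω with h | h <;> simp [h]
  -- the three basic integrable functions
  have hf₁ : Integrable (fun ω => D ω * ΔY₁ ω) μ := by
    have hmeas : AEStronglyMeasurable[ambientMS μ] (fun ω => D ω * ΔY₁ ω) μ := (hDm.mul hY₁m).aestronglyMeasurable
    refine integrable_of_ae_bound (M := C) hmeas (ae_of_all _ fun ω => ?_)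
    calc |D ω * ΔY₁ ω| = |D ω| * |ΔY₁ ω| := abs_mul _ _
      _ ≤ 1 * C := mul_le_mul (hDbd ω) (hbdd₁ ω) (abs_nonneg _) zero_le_one
      _ = C := one_mul C
  have hf₀ : Integrable (fun ω => (1 - D ω) * ΔY₀ ω) μ := by
    have hmeas : AEStronglyMeasurable[ambientMS μ] (fun ω => (1 - D ω) * ΔY₀ ω) μ := ((measurable_const.sub hDm).mul hY₀m).aestronglyMeasurable
    refine integrable_of_ae_bound (M := C) hmeas (ae_of_all _ fun ω => ?_)
    calc |(1 - D ω) * ΔY₀ ω| = |1 - D ω| * |ΔY₀ ω| := abs_mul _ _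
      _ ≤ 1 * C := mul_le_mul (hDbd' ω) (hbdd₀ ω) (abs_nonneg _) zero_le_one
      _ = C := one_mul C
  have hh : Integrable (fun ω => D ω * ΔY₀ ω) μ := by
    have hmeas : AEStronglyMeasurable[ambientMS μ] (fun ω => D ω * ΔY₀ ω) μ := (hDm.mul hY₀m).aestronglyMeasurable
    refine integrable_of_ae_bound (M := C) hmeas (ae_of_all _ fun ω => ?_)
    calc |D ω * ΔY₀ ω| = |D ω| * |ΔY₀ ω| := abs_mul _ _
      _ ≤ 1 * C := mul_le_mul (hDbd ω) (hbdd₀ ω) (abs_nonneg _) zero_le_one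
      _ = C := one_mul C
  -- a.e. bounds on π
  have hcne : c ≠ 0 := ne_of_gt hc0
  have hπne : ∀ᵐ ω ∂μ, π ω ≠ 0 ∧ (1 - π ω) ≠ 0 ∧ c ≤ π ω ∧ c ≤ 1 - π ω := by
    filter_upwards [hπc] with ω ⟨h1, h2⟩
    have h3 : c ≤ 1 - π ω := by linarith
    exact ⟨ne_of_gt (lt_of_lt_of_le hc0 h1), ne_of_gt (lt_of_lt_of_le hc0 h3), h1, h3⟩
  -- g₁ and g₀ integrable
  have habs_inv : ∀ {x : ℝ}, x ≠ 0 → c ≤ x → |x⁻¹| ≤ c⁻¹ := by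
    intro x hx hcx
    rw [abs_inv, abs_of_pos (lt_of_lt_of_le hc0 hcx)]
    exact inv_anti₀ hc0 hcx
  have hg₁ : Integrable (fun ω => (π ω)⁻¹ * (D ω * ΔY₁ ω)) μ := by
    have hmeas : AEStronglyMeasurable[ambientMS μ] (fun ω => (π ω)⁻¹ * (D ω * ΔY₁ ω)) μ :=
      (hπm.inv.mul (hDm.mul hY₁m)).aestronglyMeasurable
    refine integrable_of_ae_bound (M := c⁻¹ * (1 * C)) hmeas ?_
    filter_upwards [hπne] with ω ⟨h0, h1, h2, h3⟩
    calc |(π ω)⁻¹ * (D ω * ΔY₁ ω)| = |(π ω)⁻¹| * |D ω * ΔY₁ ω| := abs_mul _ _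
      _ ≤ c⁻¹ * (1 * C) := by
          refine mul_le_mul (habs_inv h0 h2) ?_ (abs_nonneg _) (by positivity)
          calc |D ω * ΔY₁ ω| = |D ω| * |ΔY₁ ω| := abs_mul _ _
            _ ≤ 1 * C := mul_le_mul (hDbd ω) (hbdd₁ ω) (abs_nonneg _) zero_le_one
  have hg₀ : Integrable (fun ω => (1 - π ω)⁻¹ * ((1 - D ω) * ΔY₀ ω)) μ := by
    have hmeas : AEStronglyMeasurable[ambientMS μ] (fun ω => (1 - π ω)⁻¹ * ((1 - D ω) * ΔY₀ ω)) μ :=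
      ((measurable_const.sub hπm).inv.mul ((measurable_const.sub hDm).mul hY₀m)).aestronglyMeasurable
    refine integrable_of_ae_bound (M := c⁻¹ * (1 * C)) hmeas ?_
    filter_upwards [hπne] with ω ⟨h0, h1, h2, h3⟩
    calc |(1 - π ω)⁻¹ * ((1 - D ω) * ΔY₀ ω)| = |(1 - π ω)⁻¹| * |(1 - D ω) * ΔY₀ ω| :=
        abs_mul _ _
      _ ≤ c⁻¹ * (1 * C) := by
          refine mul_le_mul (habs_inv h1 h3) ?_ (abs_nonneg _) (by positivity)
          calc |(1 - D ω) * ΔY₀ ω| = |1 - D ω| * |ΔY₀ ω| := abs_mul _ _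
            _ ≤ 1 * C := mul_le_mul (hDbd' ω) (hbdd₀ ω) (abs_nonneg _) zero_le_one
  -- pointwise a.e. decomposition of ρ₀ * ΔY
  have hdecomp : (fun ω => ρ₀ ω * ΔY ω) =ᵐ[μ]
      fun ω => (π ω)⁻¹ * (D ω * ΔY₁ ω) - (1 - π ω)⁻¹ * ((1 - D ω) * ΔY₀ ω) := by
    filter_upwards [hπne] with ω ⟨h0, h1, _, _⟩
    rw [hρ₀ ω, hΔY ω]
    rcases hD01 ω with h | h <;> rw [h] <;> field_simp <;> ring
  -- conditional expectation computations
  have step1 : μ[fun ω => ρ₀ ω * ΔY ω | m] =ᵐ[μ]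
      μ[fun ω => (π ω)⁻¹ * (D ω * ΔY₁ ω) - (1 - π ω)⁻¹ * ((1 - D ω) * ΔY₀ ω) | m] :=
    condExp_congr_ae hdecomp
  have step2 : μ[fun ω => (π ω)⁻¹ * (D ω * ΔY₁ ω) - (1 - π ω)⁻¹ * ((1 - D ω) * ΔY₀ ω) | m]
      =ᵐ[μ] μ[fun ω => (π ω)⁻¹ * (D ω * ΔY₁ ω) | m]
        - μ[fun ω => (1 - π ω)⁻¹ * ((1 - D ω) * ΔY₀ ω) | m] := condExp_sub hg₁ hg₀ m
  have hπinvSM : StronglyMeasurable[m] (fun ω => (π ω)⁻¹) := hπmeas.inv.stronglyMeasurable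
  have hπinvSM' : StronglyMeasurable[m] (fun ω => (1 - π ω)⁻¹) :=
    ((measurable_const.sub hπmeas).inv).stronglyMeasurable
  have step3 : μ[fun ω => (π ω)⁻¹ * (D ω * ΔY₁ ω) | m] =ᵐ[μ]
      fun ω => (π ω)⁻¹ * (μ[fun ω' => D ω' * ΔY₁ ω' | m]) ω :=
    condExp_mul_of_stronglyMeasurable_left hπinvSM hg₁ hf₁
  have step4 : μ[fun ω => (1 - π ω)⁻¹ * ((1 - D ω) * ΔY₀ ω) | m] =ᵐ[μ]
      fun ω => (1 - π ω)⁻¹ * (μ[fun ω' => (1 - D ω') * ΔY₀ ω' | m]) ω :=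
    condExp_mul_of_stronglyMeasurable_left hπinvSM' hg₀ hf₀
  -- use parallel trend
  have step5 : (fun ω => (1 - π ω)⁻¹ * (μ[fun ω' => (1 - D ω') * ΔY₀ ω' | m]) ω) =ᵐ[μ]
      fun ω => (π ω)⁻¹ * (μ[fun ω' => D ω' * ΔY₀ ω' | m]) ω := by
    filter_upwards [hPT, hπne] with ω hPTω ⟨h0, h1, _, _⟩
    have : (μ[fun ω' => D ω' * ΔY₀ ω' | m]) ω * (1 - π ω) =
        (μ[fun ω' => (1 - D ω') * ΔY₀ ω' | m]) ω * π ω := hPTω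
    field_simp
    linarith [this]
  -- combine
  have step6 : μ[fun ω' => D ω' * (ΔY₁ ω' - ΔY₀ ω') | m] =ᵐ[μ]
      μ[fun ω' => D ω' * ΔY₁ ω' | m] - μ[fun ω' => D ω' * ΔY₀ ω' | m] := by
    have : (fun ω' => D ω' * (ΔY₁ ω' - ΔY₀ ω')) =
        fun ω' => D ω' * ΔY₁ ω' - D ω' * ΔY₀ ω' := by funext ω'; ring
    rw [this]
    exact condExp_sub hf₁ hh m
  rw [hτ₀]
  calc μ[fun ω => ρ₀ ω * ΔY ω | m]
      =ᵐ[μ] μ[fun ω => (π ω)⁻¹ * (D ω * ΔY₁ ω) | m]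
        - μ[fun ω => (1 - π ω)⁻¹ * ((1 - D ω) * ΔY₀ ω) | m] := step1.trans step2
    _ =ᵐ[μ] fun ω => (π ω)⁻¹ * (μ[fun ω' => D ω' * ΔY₁ ω' | m]) ω
        - (π ω)⁻¹ * (μ[fun ω' => D ω' * ΔY₀ ω' | m]) ω := by
          filter_upwards [step3, step4, step5] with ω h3 h4 h5
          simp only [Pi.sub_apply]
          rw [h3, h4, h5]
    _ =ᵐ[μ] fun ω => (μ[fun ω' => D ω' * (ΔY₁ ω' - ΔY₀ ω') | m]) ω / π ω := by
          filter_upwards [step6] with ω h6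
          rw [h6]
          simp only [Pi.sub_apply]
          rw [div_eq_inv_mul]
          ring
end

section
/- (Double robustness, propensity score correctly specified.) Let Φ₁ and Φ₀ be arbitrary bounded 𝔪-measurable random variables (possibly misspecified outcome models). Then almost surely 𝔼[ρ₀·(ΔY − (1−π)·Φ₁ − π·Φ₀) | 𝔪] = 𝔼[ρ₀·ΔY | 𝔪]; consequently, under the conditional parallel trend assumption, 𝔼[ρ₀·(ΔY − (1−π)·Φ₁ − π·Φ₀) | 𝔪] = τ₀ almost surely. -/
open MeasureTheory

private lemma abs_mul_le' {a b A B : ℝ} (ha : |a| ≤ A) (hb : |b| ≤ B) : |a * b| ≤ A * B := by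
  rw [abs_mul]
  exact mul_le_mul ha hb (abs_nonneg _) (le_trans (abs_nonneg _) ha)

private lemma abs_sub_le'' {a b A B : ℝ} (ha : |a| ≤ A) (hb : |b| ≤ B) : |a - b| ≤ A + B :=
  (abs_sub a b).trans (add_le_add ha hb)

private lemma integrable_of_bdd {Ω : Type*} {m0 : MeasurableSpace Ω} {μ : Measure Ω}
    [IsProbabilityMeasure μ] {f : Ω → ℝ} (hf : Measurable f) {C : ℝ}
    (h : ∀ᵐ ω ∂μ, |f ω| ≤ C) : Integrable f μ :=
  (integrable_const C).mono' hf.aestronglyMeasurable (h.mono fun ω hω => by simpa using hω)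

private lemma drcp_aux
    {Ω : Type*} {m0 : MeasurableSpace Ω}
    (μ : Measure Ω) [IsProbabilityMeasure μ]
    (m : MeasurableSpace Ω)
    (D : Ω → ℝ) (hDm : Measurable[m0] D) (hD01 : ∀ ω, D ω = 0 ∨ D ω = 1)
    (ΔY₁ ΔY₀ : Ω → ℝ) (hY₁m : Measurable[m0] ΔY₁) (hY₀m : Measurable[m0] ΔY₀)
    (C : ℝ) (hbdd₁ : ∀ ω, |ΔY₁ ω| ≤ C) (hbdd₀ : ∀ ω, |ΔY₀ ω| ≤ C)
    (ΔY : Ω → ℝ) (hΔY : ∀ ω, ΔY ω = D ω * ΔY₁ ω + (1 - D ω) * ΔY₀ ω)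
    (c : ℝ) (hc0 : 0 < c) (hc2 : c < 1 / 2)
    (π : Ω → ℝ) (hπmeas : Measurable[m] π)
    (hπ : π =ᵐ[μ] μ[D | m])
    (hπc : ∀ᵐ ω ∂μ, c ≤ π ω ∧ π ω ≤ 1 - c)
    (ρ₀ : Ω → ℝ) (hρ₀ : ∀ ω, ρ₀ ω = (D ω - π ω) / (π ω * (1 - π ω)))
    (Φ₁ Φ₀ : Ω → ℝ) (hΦ₁meas : Measurable[m] Φ₁) (hΦ₀meas : Measurable[m] Φ₀)
    (CΦ : ℝ) (hΦ₁bdd : ∀ ω, |Φ₁ ω| ≤ CΦ) (hΦ₀bdd : ∀ ω, |Φ₀ ω| ≤ CΦ)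
    (τ₀ : Ω → ℝ)
    (hτ₀ : τ₀ = fun ω => (μ[fun ω' => D ω' * (ΔY₁ ω' - ΔY₀ ω') | m]) ω / π ω) :
    (μ[fun ω => ρ₀ ω * (ΔY ω - (1 - π ω) * Φ₁ ω - π ω * Φ₀ ω) | m] =ᵐ[μ]
        μ[fun ω => ρ₀ ω * ΔY ω | m]) ∧
    (((fun ω => (μ[fun ω' => D ω' * ΔY₀ ω' | m]) ω * (1 - π ω)) =ᵐ[μ]
        fun ω => (μ[fun ω' => (1 - D ω') * ΔY₀ ω' | m]) ω * π ω) →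
      μ[fun ω => ρ₀ ω * (ΔY ω - (1 - π ω) * Φ₁ ω - π ω * Φ₀ ω) | m] =ᵐ[μ] τ₀) := by
  by_cases hle : m ≤ m0
  case neg =>
    have hz : ∀ (f : Ω → ℝ), μ[f | m] = 0 := fun f => condExp_of_not_le hle
    constructor
    · rw [hz, hz]
    · intro _
      rw [hz, hτ₀, hz]
      refine Filter.Eventually.of_forall fun ω => ?_
      simp
  have hΩ : Nonempty Ω := by
    by_contra hne
    rw [not_nonempty_iff] at hne
    have h1 : μ Set.univ = 1 := measure_univ
    rw [Set.univ_eq_empty_iff.mpr hne, measure_empty] at h1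
    exact zero_ne_one h1
  have hC0 : 0 ≤ C := le_trans (abs_nonneg _) (hbdd₀ (Classical.arbitrary Ω))
  have hCΦ0 : 0 ≤ CΦ := le_trans (abs_nonneg _) (hΦ₀bdd (Classical.arbitrary Ω))
  have hcc : (0:ℝ) < c * c := by positivity
  -- measurability
  have hπM : Measurable[m0] π := hπmeas.mono hle le_rfl
  have hΦ₁M : Measurable[m0] Φ₁ := hΦ₁meas.mono hle le_rfl
  have hΦ₀M : Measurable[m0] Φ₀ := hΦ₀meas.mono hle le_rfl
  have hD : Measurable[m0] D := hDm
  have hY₁ : Measurable[m0] ΔY₁ := hY₁m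
  have hY₀ : Measurable[m0] ΔY₀ := hY₀m
  set h : Ω → ℝ := fun ω => (π ω * (1 - π ω))⁻¹ with hhdef
  have hhm : Measurable[m] h := (hπmeas.mul (measurable_const.sub hπmeas)).inv
  have hhM : Measurable[m0] h := hhm.mono hle le_rfl
  -- pointwise bounds
  have hDb : ∀ ω, |D ω| ≤ 1 := by
    intro ω; rcases hD01 ω with hd | hd <;> rw [hd] <;> norm_num
  have h1Db : ∀ ω, |1 - D ω| ≤ 1 := by
    intro ω; rcases hD01 ω with hd | hd <;> rw [hd] <;> norm_num
  have hΔYb : ∀ ω, |ΔY ω| ≤ C := by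
    intro ω; rcases hD01 ω with hd | hd <;> rw [hΔY ω, hd] <;> simpa using (by first | exact hbdd₀ ω | exact hbdd₁ ω)
  -- a.e. bounds
  have hfacts : ∀ᵐ ω ∂μ, |π ω| ≤ 1 ∧ |1 - π ω| ≤ 1 ∧ |h ω| ≤ (c * c)⁻¹ := by
    filter_upwards [hπc] with ω hω
    obtain ⟨h1, h2⟩ := hω
    have hc1 : c < 1 := by linarith
    have hπ1 : |π ω| ≤ 1 := abs_le.mpr ⟨by linarith, by linarith⟩
    have hπ2 : |1 - π ω| ≤ 1 := abs_le.mpr ⟨by linarith, by linarith⟩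
    have hprod : c * c ≤ π ω * (1 - π ω) := by nlinarith
    have hpos : 0 < π ω * (1 - π ω) := lt_of_lt_of_le hcc hprod
    refine ⟨hπ1, hπ2, ?_⟩
    rw [hhdef, abs_of_pos (inv_pos.mpr hpos)]
    exact inv_anti₀ hcc hprod
  have hρeq : ∀ ω, ρ₀ ω = (D ω - π ω) * h ω := fun ω => by
    rw [hρ₀ ω, hhdef]; exact div_eq_mul_inv _ _
  have hρb : ∀ᵐ ω ∂μ, |ρ₀ ω| ≤ 2 * (c * c)⁻¹ := by
    filter_upwards [hfacts] with ω ⟨h1, h2, h3⟩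
    rw [hρeq ω]
    have h4 : |D ω - π ω| ≤ 1 + 1 := abs_sub_le'' (hDb ω) h1
    have := abs_mul_le' h4 h3
    linarith
  -- integrability
  have iD : Integrable D μ := integrable_of_bdd hD (Filter.Eventually.of_forall hDb)
  have iπ : Integrable π μ := integrable_of_bdd hπM
    (hfacts.mono fun ω hω => hω.1)
  have iDπ : Integrable (fun ω => D ω - π ω) μ := integrable_of_bdd (hD.sub hπM)
    (hfacts.mono fun ω hω => by
      simpa using abs_sub_le'' (hDb ω) hω.1)
  -- outcome-model part
  set g : Ω → ℝ := fun ω => h ω * ((1 - π ω) * Φ₁ ω + π ω * Φ₀ ω) with hgdef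
  have hgm : Measurable[m] g :=
    hhm.mul (((measurable_const.sub hπmeas).mul hΦ₁meas).add (hπmeas.mul hΦ₀meas))
  have hgM : Measurable[m0] g := hgm.mono hle le_rfl
  have hgb : ∀ᵐ ω ∂μ, |g ω| ≤ (c*c)⁻¹ * (1 * CΦ + 1 * CΦ) := by
    filter_upwards [hfacts] with ω ⟨h1, h2, h3⟩
    refine abs_mul_le' h3 ?_
    exact (abs_add_le _ _).trans (add_le_add (abs_mul_le' h2 (hΦ₁bdd ω)) (abs_mul_le' h1 (hΦ₀bdd ω)))
  have ig : Integrable g μ := integrable_of_bdd hgM hgb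
  have igDπ : Integrable (fun ω => g ω * (D ω - π ω)) μ := by
    refine integrable_of_bdd ((hgM.mul (hD.sub hπM))) (C := ((c*c)⁻¹ * (1 * CΦ + 1 * CΦ)) * (1 + 1)) ?_
    filter_upwards [hgb, hfacts] with ω h1 h2
    refine abs_mul_le' h1 ?_
    simpa using abs_sub_le'' (hDb ω) h2.1
  -- E[D - π | m] = 0 a.e.
  have hcondDπ : μ[fun ω => D ω - π ω | m] =ᵐ[μ] 0 := by
    have h1 : μ[fun ω => D ω - π ω | m] =ᵐ[μ] μ[D | m] - μ[π | m] := condExp_sub iD iπ m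
    have h2 : μ[π | m] = π := condExp_of_stronglyMeasurable hle hπmeas.stronglyMeasurable iπ
    filter_upwards [h1, hπ] with ω hω hπω
    simp only [Pi.sub_apply, Pi.zero_apply] at *
    rw [hω, h2, ← hπω]; ring
  -- E[g * (D - π) | m] = 0 a.e.
  have hgzero : μ[fun ω => g ω * (D ω - π ω) | m] =ᵐ[μ] 0 := by
    have hpull : μ[fun ω => g ω * (D ω - π ω) | m] =ᵐ[μ]
        fun ω => g ω * (μ[fun ω => D ω - π ω | m]) ω :=
      condExp_mul_of_stronglyMeasurable_left hgm.stronglyMeasurable igDπ iDπ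
    filter_upwards [hpull, hcondDπ] with ω h1 h2
    simp only [Pi.zero_apply] at *
    rw [h1, h2, mul_zero]
  -- integrability of weighted scores
  have hρM : Measurable[m0] ρ₀ := by
    have : ρ₀ = fun ω => (D ω - π ω) * h ω := funext hρeq
    rw [this]; exact (hD.sub hπM).mul hhM
  have hΔYM : Measurable[m0] ΔY := by
    have : ΔY = fun ω => D ω * ΔY₁ ω + (1 - D ω) * ΔY₀ ω := funext hΔY
    rw [this]; exact (hD.mul hY₁).add ((measurable_const.sub hD).mul hY₀)
  have iρΔY : Integrable (fun ω => ρ₀ ω * ΔY ω) μ :=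
    integrable_of_bdd (hρM.mul hΔYM)
      (hρb.mono fun ω hω => abs_mul_le' hω (hΔYb ω))
  have iLHS : Integrable (fun ω => ρ₀ ω * (ΔY ω - (1 - π ω) * Φ₁ ω - π ω * Φ₀ ω)) μ := by
    refine integrable_of_bdd ((hρM.mul ((hΔYM.sub ((measurable_const.sub hπM).mul hΦ₁M)).sub
      (hπM.mul hΦ₀M)))) (C := (2*(c*c)⁻¹) * (C + 1*CΦ + 1*CΦ)) ?_
    filter_upwards [hρb, hfacts] with ω h1 ⟨h2, h3, h4⟩
    refine abs_mul_le' h1 ?_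
    have e1 : |ΔY ω - (1 - π ω) * Φ₁ ω - π ω * Φ₀ ω| ≤ |ΔY ω| + |(1 - π ω) * Φ₁ ω| + |π ω * Φ₀ ω| := by
      calc |ΔY ω - (1 - π ω) * Φ₁ ω - π ω * Φ₀ ω|
          ≤ |ΔY ω - (1 - π ω) * Φ₁ ω| + |π ω * Φ₀ ω| := abs_sub _ _
        _ ≤ |ΔY ω| + |(1 - π ω) * Φ₁ ω| + |π ω * Φ₀ ω| := by
            have := abs_sub (ΔY ω) ((1 - π ω) * Φ₁ ω); linarith
    have := abs_mul_le' h3 (hΦ₁bdd ω)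
    have := abs_mul_le' h2 (hΦ₀bdd ω)
    have := hΔYb ω
    linarith
  -- First claim
  have hpt1 : ∀ ω, ρ₀ ω * (ΔY ω - (1 - π ω) * Φ₁ ω - π ω * Φ₀ ω)
      = ρ₀ ω * ΔY ω - g ω * (D ω - π ω) := by
    intro ω
    rw [hgdef]
    simp only
    rw [hρeq ω]; ring
  have claim1 : μ[fun ω => ρ₀ ω * (ΔY ω - (1 - π ω) * Φ₁ ω - π ω * Φ₀ ω) | m] =ᵐ[μ]
      μ[fun ω => ρ₀ ω * ΔY ω | m] := by
    have e1 : μ[fun ω => ρ₀ ω * (ΔY ω - (1 - π ω) * Φ₁ ω - π ω * Φ₀ ω) | m] =ᵐ[μ]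
        μ[fun ω => ρ₀ ω * ΔY ω - g ω * (D ω - π ω) | m] :=
      condExp_congr_ae (Filter.Eventually.of_forall hpt1)
    have e2 : μ[fun ω => ρ₀ ω * ΔY ω - g ω * (D ω - π ω) | m] =ᵐ[μ]
        μ[fun ω => ρ₀ ω * ΔY ω | m] - μ[fun ω => g ω * (D ω - π ω) | m] :=
      condExp_sub iρΔY igDπ m
    filter_upwards [e1, e2, hgzero] with ω a1 a2 a3
    simp only [Pi.sub_apply, Pi.zero_apply] at *
    rw [a1, a2, a3, sub_zero]
  refine ⟨claim1, fun hPT => ?_⟩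
  -- Second claim
  set k₁ : Ω → ℝ := fun ω => h ω * (1 - π ω) with hk₁def
  set k₀ : Ω → ℝ := fun ω => h ω * π ω with hk₀def
  have hk₁m : Measurable[m] k₁ := hhm.mul (measurable_const.sub hπmeas)
  have hk₀m : Measurable[m] k₀ := hhm.mul hπmeas
  have hk₁b : ∀ᵐ ω ∂μ, |k₁ ω| ≤ (c*c)⁻¹ * 1 :=
    hfacts.mono fun ω hω => abs_mul_le' hω.2.2 hω.2.1
  have hk₀b : ∀ᵐ ω ∂μ, |k₀ ω| ≤ (c*c)⁻¹ * 1 :=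
    hfacts.mono fun ω hω => abs_mul_le' hω.2.2 hω.1
  have iDY1 : Integrable (fun ω => D ω * ΔY₁ ω) μ :=
    integrable_of_bdd (hD.mul hY₁)
      (Filter.Eventually.of_forall fun ω => by simpa using abs_mul_le' (hDb ω) (hbdd₁ ω))
  have iDY0 : Integrable (fun ω => D ω * ΔY₀ ω) μ :=
    integrable_of_bdd (hD.mul hY₀)
      (Filter.Eventually.of_forall fun ω => by simpa using abs_mul_le' (hDb ω) (hbdd₀ ω))
  have i1DY0 : Integrable (fun ω => (1 - D ω) * ΔY₀ ω) μ :=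
    integrable_of_bdd ((measurable_const.sub hD).mul hY₀)
      (Filter.Eventually.of_forall fun ω => by simpa using abs_mul_le' (h1Db ω) (hbdd₀ ω))
  have hk₁M : Measurable[m0] k₁ := hk₁m.mono hle le_rfl
  have hk₀M : Measurable[m0] k₀ := hk₀m.mono hle le_rfl
  have ik₁DY1 : Integrable (fun ω => k₁ ω * (D ω * ΔY₁ ω)) μ :=
    integrable_of_bdd (hk₁M.mul (hD.mul hY₁))
      (hk₁b.mono fun ω hω => abs_mul_le' hω (by simpa using abs_mul_le' (hDb ω) (hbdd₁ ω)))
  have ik₀Y0 : Integrable (fun ω => k₀ ω * ((1 - D ω) * ΔY₀ ω)) μ :=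
    integrable_of_bdd (hk₀M.mul ((measurable_const.sub hD).mul hY₀))
      (hk₀b.mono fun ω hω => abs_mul_le' hω (by simpa using abs_mul_le' (h1Db ω) (hbdd₀ ω)))
  -- pointwise decomposition of ρ₀ ΔY
  have hpt2 : ∀ ω, ρ₀ ω * ΔY ω = k₁ ω * (D ω * ΔY₁ ω) - k₀ ω * ((1 - D ω) * ΔY₀ ω) := by
    intro ω
    rw [hρeq ω, hΔY ω, hk₁def, hk₀def]
    simp only
    rcases hD01 ω with hd | hd <;> rw [hd] <;> ring
  -- conditional expectation of ρ₀ ΔY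
  have pull1 : μ[fun ω => k₁ ω * (D ω * ΔY₁ ω) | m] =ᵐ[μ]
      fun ω => k₁ ω * (μ[fun ω => D ω * ΔY₁ ω | m]) ω :=
    condExp_mul_of_stronglyMeasurable_left hk₁m.stronglyMeasurable ik₁DY1 iDY1
  have pull0 : μ[fun ω => k₀ ω * ((1 - D ω) * ΔY₀ ω) | m] =ᵐ[μ]
      fun ω => k₀ ω * (μ[fun ω => (1 - D ω) * ΔY₀ ω | m]) ω :=
    condExp_mul_of_stronglyMeasurable_left hk₀m.stronglyMeasurable ik₀Y0 i1DY0
  have e3 : μ[fun ω => ρ₀ ω * ΔY ω | m] =ᵐ[μ]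
      μ[fun ω => k₁ ω * (D ω * ΔY₁ ω) - k₀ ω * ((1 - D ω) * ΔY₀ ω) | m] :=
    condExp_congr_ae (Filter.Eventually.of_forall hpt2)
  have e4 : μ[fun ω => k₁ ω * (D ω * ΔY₁ ω) - k₀ ω * ((1 - D ω) * ΔY₀ ω) | m] =ᵐ[μ]
      μ[fun ω => k₁ ω * (D ω * ΔY₁ ω) | m] - μ[fun ω => k₀ ω * ((1 - D ω) * ΔY₀ ω) | m] :=
    condExp_sub ik₁DY1 ik₀Y0 m
  -- difference of conditional means
  have e5 : μ[fun ω' => D ω' * (ΔY₁ ω' - ΔY₀ ω') | m] =ᵐ[μ]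
      μ[fun ω => D ω * ΔY₁ ω | m] - μ[fun ω => D ω * ΔY₀ ω | m] := by
    have : μ[fun ω' => D ω' * (ΔY₁ ω' - ΔY₀ ω') | m] =ᵐ[μ]
        μ[fun ω => D ω * ΔY₁ ω - D ω * ΔY₀ ω | m] :=
      condExp_congr_ae (Filter.Eventually.of_forall fun ω => by ring)
    exact this.trans (condExp_sub iDY1 iDY0 m)
  rw [hτ₀]
  filter_upwards [claim1, e3, e4, pull1, pull0, hPT, e5, hπc] with ω a1 a2 a3 a4 a5 a6 a7 a8
  simp only [Pi.sub_apply] at a3 a7 ⊢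
  rw [a1, a2, a3, a4, a5]
  have hπpos : 0 < π ω := lt_of_lt_of_le hc0 a8.1
  have h1πpos : 0 < 1 - π ω := by linarith [a8.2, hc2]
  -- use parallel trends
  have hswap : k₀ ω * (μ[fun ω => (1 - D ω) * ΔY₀ ω | m]) ω
      = k₁ ω * (μ[fun ω => D ω * ΔY₀ ω | m]) ω := by
    rw [hk₀def, hk₁def]
    simp only
    have : (μ[fun ω' => (1 - D ω') * ΔY₀ ω' | m]) ω * π ω
        = (μ[fun ω' => D ω' * ΔY₀ ω' | m]) ω * (1 - π ω) := a6.symm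
    linear_combination (h ω) * this
  rw [hswap]
  have : k₁ ω * (μ[fun ω => D ω * ΔY₁ ω | m]) ω - k₁ ω * (μ[fun ω => D ω * ΔY₀ ω | m]) ω
      = k₁ ω * ((μ[fun ω => D ω * ΔY₁ ω | m]) ω - (μ[fun ω => D ω * ΔY₀ ω | m]) ω) := by ring
  rw [this, ← a7]
  rw [hk₁def, hhdef]
  simp only
  have h1 : π ω ≠ 0 := ne_of_gt hπpos
  have h2 : 1 - π ω ≠ 0 := ne_of_gt h1πpos
  field_simp

/-- Double robustness with a correctly specified propensity score: for arbitrary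
bounded `𝔪`-measurable (possibly misspecified) outcome models `Φ₁, Φ₀`, the
augmented score has the same conditional mean as the Abadie weighted score, and
under conditional parallel trends it identifies the conditional ATT `τ₀`. -/
theorem doubly_robust_correct_propensity
    {Ω 𝒲 : Type*} (m : MeasurableSpace Ω) [MeasurableSpace Ω] [m𝒲 : MeasurableSpace 𝒲]
    (μ : Measure Ω) [IsProbabilityMeasure μ]
    (W : Ω → 𝒲) (hW : Measurable W)
    (hmW : m = MeasurableSpace.comap W m𝒲)
    (hm : m ≤ ‹MeasurableSpace Ω›)
    (D : Ω → ℝ) (hD : Measurable D) (hD01 : ∀ ω, D ω = 0 ∨ D ω = 1)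
    (ΔY₁ ΔY₀ : Ω → ℝ) (hY₁ : Measurable ΔY₁) (hY₀ : Measurable ΔY₀)
    (C : ℝ) (hbdd₁ : ∀ ω, |ΔY₁ ω| ≤ C) (hbdd₀ : ∀ ω, |ΔY₀ ω| ≤ C)
    (ΔY : Ω → ℝ) (hΔY : ∀ ω, ΔY ω = D ω * ΔY₁ ω + (1 - D ω) * ΔY₀ ω)
    (c : ℝ) (hc0 : 0 < c) (hc2 : c < 1 / 2)
    (π : Ω → ℝ) (hπmeas : Measurable[m] π)
    (hπ : π =ᵐ[μ] μ[D | m])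
    (hπc : ∀ᵐ ω ∂μ, c ≤ π ω ∧ π ω ≤ 1 - c)
    (ρ₀ : Ω → ℝ) (hρ₀ : ∀ ω, ρ₀ ω = (D ω - π ω) / (π ω * (1 - π ω)))
    -- arbitrary bounded 𝔪-measurable outcome models (possibly misspecified)
    (Φ₁ Φ₀ : Ω → ℝ) (hΦ₁meas : Measurable[m] Φ₁) (hΦ₀meas : Measurable[m] Φ₀)
    (CΦ : ℝ) (hΦ₁bdd : ∀ ω, |Φ₁ ω| ≤ CΦ) (hΦ₀bdd : ∀ ω, |Φ₀ ω| ≤ CΦ)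
    -- conditional ATT
    (τ₀ : Ω → ℝ)
    (hτ₀ : τ₀ = fun ω => (μ[fun ω' => D ω' * (ΔY₁ ω' - ΔY₀ ω') | m]) ω / π ω) :
    (μ[fun ω => ρ₀ ω * (ΔY ω - (1 - π ω) * Φ₁ ω - π ω * Φ₀ ω) | m] =ᵐ[μ]
        μ[fun ω => ρ₀ ω * ΔY ω | m]) ∧
    (((fun ω => (μ[fun ω' => D ω' * ΔY₀ ω' | m]) ω * (1 - π ω)) =ᵐ[μ]
        fun ω => (μ[fun ω' => (1 - D ω') * ΔY₀ ω' | m]) ω * π ω) →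
      μ[fun ω => ρ₀ ω * (ΔY ω - (1 - π ω) * Φ₁ ω - π ω * Φ₀ ω) | m] =ᵐ[μ] τ₀) := by
  exact drcp_aux μ m D hD hD01 ΔY₁ ΔY₀ hY₁ hY₀ C hbdd₁ hbdd₀ ΔY hΔY c hc0 hc2 π hπmeas hπ hπc
    ρ₀ hρ₀ Φ₁ Φ₀ hΦ₁meas hΦ₀meas CΦ hΦ₁bdd hΦ₀bdd τ₀ hτ₀
end

section
/- (Double robustness, outcome regressions correctly specified.) Let p̃ be any 𝔪-measurable random variable with c ≤ p̃ ≤ 1−c a.s. (a possibly misspecified propensity), set ρ̃ := (D − p̃)/(p̃(1 − p̃)), and let Φ₁, Φ₀ be bounded 𝔪-measurable random variables satisfying 𝔼[D·(ΔY₁ − Φ₁) | 𝔪] = 0 a.s. and 𝔼[(1−D)·(ΔY₀ − Φ₀) | 𝔪] = 0 a.s. (correctly specified outcome regressions). Then almost surely 𝔼[ρ̃·(ΔY − (1−p̃)·Φ₁ − p̃·Φ₀) | 𝔪] = Φ₁ − Φ₀; moreover, under the conditional parallel trend assumption, Φ₁ − Φ₀ = τ₀ almost surely. -/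
open MeasureTheory

private lemma intg_of_bdd {Ω : Type*} {mΩ : MeasurableSpace Ω} (μ : Measure Ω)
    (hfin : IsFiniteMeasure μ) {f : Ω → ℝ} (hf : Measurable f) (C : ℝ)
    (h : ∀ᵐ ω ∂μ, |f ω| ≤ C) : Integrable f μ :=
  Integrable.mono' (integrable_const C) hf.aestronglyMeasurable
    (by simpa [Real.norm_eq_abs] using h)

/-- Double robustness with correctly specified outcome regressions: for any
(possibly misspecified) 𝔪-measurable propensity `pt` bounded in `[c, 1−c]`, with
`ρt = (D − pt)/(pt(1 − pt))` and outcome regressions `Φ₁, Φ₀` satisfying the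
conditional moment conditions, the augmented score has conditional mean
`Φ₁ − Φ₀`, which equals `τ₀` under conditional parallel trends. -/
theorem doubly_robust_correct_outcome_regressions
    {Ω 𝒲 : Type*} (m : MeasurableSpace Ω) [MeasurableSpace Ω] [m𝒲 : MeasurableSpace 𝒲]
    (μ : Measure Ω) [IsProbabilityMeasure μ]
    (W : Ω → 𝒲) (hW : Measurable W)
    (hmW : m = MeasurableSpace.comap W m𝒲)
    (hm : m ≤ ‹MeasurableSpace Ω›)
    (D : Ω → ℝ) (hD : Measurable D) (hD01 : ∀ ω, D ω = 0 ∨ D ω = 1)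
    (ΔY₁ ΔY₀ : Ω → ℝ) (hY₁ : Measurable ΔY₁) (hY₀ : Measurable ΔY₀)
    (C : ℝ) (hbdd₁ : ∀ ω, |ΔY₁ ω| ≤ C) (hbdd₀ : ∀ ω, |ΔY₀ ω| ≤ C)
    (ΔY : Ω → ℝ) (hΔY : ∀ ω, ΔY ω = D ω * ΔY₁ ω + (1 - D ω) * ΔY₀ ω)
    (c : ℝ) (hc0 : 0 < c) (hc2 : c < 1 / 2)
    -- the true propensity score
    (π : Ω → ℝ) (hπmeas : Measurable[m] π)
    (hπ : π =ᵐ[μ] μ[D | m])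
    (hπc : ∀ᵐ ω ∂μ, c ≤ π ω ∧ π ω ≤ 1 - c)
    -- possibly misspecified propensity
    (pt : Ω → ℝ) (hptmeas : Measurable[m] pt)
    (hptc : ∀ᵐ ω ∂μ, c ≤ pt ω ∧ pt ω ≤ 1 - c)
    (ρt : Ω → ℝ) (hρt : ∀ ω, ρt ω = (D ω - pt ω) / (pt ω * (1 - pt ω)))
    -- correctly specified outcome regressions
    (Φ₁ Φ₀ : Ω → ℝ) (hΦ₁meas : Measurable[m] Φ₁) (hΦ₀meas : Measurable[m] Φ₀)
    (CΦ : ℝ) (hΦ₁bdd : ∀ ω, |Φ₁ ω| ≤ CΦ) (hΦ₀bdd : ∀ ω, |Φ₀ ω| ≤ CΦ)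
    (hΦ₁ : μ[fun ω => D ω * (ΔY₁ ω - Φ₁ ω) | m] =ᵐ[μ] 0)
    (hΦ₀ : μ[fun ω => (1 - D ω) * (ΔY₀ ω - Φ₀ ω) | m] =ᵐ[μ] 0)
    -- conditional ATT
    (τ₀ : Ω → ℝ)
    (hτ₀ : τ₀ = fun ω => (μ[fun ω' => D ω' * (ΔY₁ ω' - ΔY₀ ω') | m]) ω / π ω) :
    (μ[fun ω => ρt ω * (ΔY ω - (1 - pt ω) * Φ₁ ω - pt ω * Φ₀ ω) | m] =ᵐ[μ]
        fun ω => Φ₁ ω - Φ₀ ω) ∧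
    (((fun ω => (μ[fun ω' => D ω' * ΔY₀ ω' | m]) ω * (1 - π ω)) =ᵐ[μ]
        fun ω => (μ[fun ω' => (1 - D ω') * ΔY₀ ω' | m]) ω * π ω) →
      (fun ω => Φ₁ ω - Φ₀ ω) =ᵐ[μ] τ₀) := by
  -- the σ-algebra m is below the ambient one
  have hle := hW.comap_le
  rw [← hmW] at hle
  -- basic measurability facts
  have hDM := hD
  have hY₁M := hY₁
  have hY₀M := hY₀
  have hptM := hptmeas.mono hle le_rfl
  have hΦ₁M := hΦ₁meas.mono hle le_rfl
  have hΦ₀M := hΦ₀meas.mono hle le_rfl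
  have hDbd : ∀ ω, |D ω| ≤ 1 := by
    intro ω; rcases hD01 ω with h | h <;> rw [h] <;> norm_num
  -- integrability of the basic (bounded, measurable) functions
  have hIg₁ : Integrable (fun ω => D ω * (ΔY₁ ω - Φ₁ ω)) μ := by
    refine intg_of_bdd μ inferInstance ((hDM.mul (hY₁M.sub hΦ₁M))) (C + CΦ) ?_
    filter_upwards with ω
    rw [abs_mul]
    calc |D ω| * |ΔY₁ ω - Φ₁ ω| ≤ 1 * (C + CΦ) := by
          apply mul_le_mul (hDbd ω) ((abs_sub _ _).trans (add_le_add (hbdd₁ ω) (hΦ₁bdd ω)))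
            (abs_nonneg _) zero_le_one
      _ = C + CΦ := one_mul _
  have hIg₀ : Integrable (fun ω => (1 - D ω) * (ΔY₀ ω - Φ₀ ω)) μ := by
    refine intg_of_bdd μ inferInstance (((measurable_const.sub hDM).mul (hY₀M.sub hΦ₀M)))
      (2 * (C + CΦ)) ?_
    filter_upwards with ω
    rw [abs_mul]
    have h1 : |1 - D ω| ≤ 2 := by rcases hD01 ω with h | h <;> rw [h] <;> norm_num
    exact mul_le_mul h1 ((abs_sub _ _).trans (add_le_add (hbdd₀ ω) (hΦ₀bdd ω)))
      (abs_nonneg _) (by norm_num)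
  have hIΦ : Integrable (fun ω => Φ₁ ω - Φ₀ ω) μ := by
    refine intg_of_bdd μ inferInstance ((hΦ₁M.sub hΦ₀M)) (CΦ + CΦ) ?_
    filter_upwards with ω
    exact (abs_sub _ _).trans (add_le_add (hΦ₁bdd ω) (hΦ₀bdd ω))
  -- the weighted pieces
  have hIa₁ : Integrable ((fun ω => (pt ω)⁻¹) * fun ω => D ω * (ΔY₁ ω - Φ₁ ω)) μ := by
    refine intg_of_bdd μ inferInstance ((hptM.inv.mul (hDM.mul (hY₁M.sub hΦ₁M))))
      (c⁻¹ * (C + CΦ)) ?_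
    filter_upwards [hptc] with ω hω
    simp only [Pi.mul_apply]
    rw [abs_mul]
    have hpt0 : 0 < pt ω := lt_of_lt_of_le hc0 hω.1
    have h1 : |(pt ω)⁻¹| ≤ c⁻¹ := by
      rw [abs_of_pos (inv_pos.2 hpt0)]
      exact inv_anti₀ hc0 hω.1
    refine mul_le_mul h1 ?_ (abs_nonneg _) (inv_nonneg.2 hc0.le)
    rw [abs_mul]
    calc |D ω| * |ΔY₁ ω - Φ₁ ω| ≤ 1 * (C + CΦ) := by
          apply mul_le_mul (hDbd ω) ((abs_sub _ _).trans (add_le_add (hbdd₁ ω) (hΦ₁bdd ω)))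
            (abs_nonneg _) zero_le_one
      _ = C + CΦ := one_mul _
  have hIa₀ : Integrable ((fun ω => (1 - pt ω)⁻¹) * fun ω => (1 - D ω) * (ΔY₀ ω - Φ₀ ω)) μ := by
    refine intg_of_bdd μ inferInstance (((measurable_const.sub hptM).inv.mul
      ((measurable_const.sub hDM).mul (hY₀M.sub hΦ₀M))))
      (c⁻¹ * (2 * (C + CΦ))) ?_
    filter_upwards [hptc] with ω hω
    simp only [Pi.mul_apply]
    rw [abs_mul]
    have hpt1 : 0 < 1 - pt ω := by linarith [hω.2]
    have h1 : |(1 - pt ω)⁻¹| ≤ c⁻¹ := by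
      rw [abs_of_pos (inv_pos.2 hpt1)]
      exact inv_anti₀ hc0 (by linarith [hω.2])
    refine mul_le_mul h1 ?_ (abs_nonneg _) (inv_nonneg.2 hc0.le)
    rw [abs_mul]
    have h2 : |1 - D ω| ≤ 2 := by rcases hD01 ω with h | h <;> rw [h] <;> norm_num
    apply mul_le_mul h2 ((abs_sub _ _).trans (add_le_add (hbdd₀ ω) (hΦ₀bdd ω)))
      (abs_nonneg _) (by norm_num)
  -- Part 1
  have part1 : μ[fun ω => ρt ω * (ΔY ω - (1 - pt ω) * Φ₁ ω - pt ω * Φ₀ ω) | m] =ᵐ[μ]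
      fun ω => Φ₁ ω - Φ₀ ω := by
    have hkey : (fun ω => ρt ω * (ΔY ω - (1 - pt ω) * Φ₁ ω - pt ω * Φ₀ ω)) =ᵐ[μ]
        ((fun ω => (pt ω)⁻¹) * (fun ω => D ω * (ΔY₁ ω - Φ₁ ω))
          - (fun ω => (1 - pt ω)⁻¹) * (fun ω => (1 - D ω) * (ΔY₀ ω - Φ₀ ω)))
          + fun ω => Φ₁ ω - Φ₀ ω := by
      filter_upwards [hptc] with ω hω
      have hp0 : pt ω ≠ 0 := ne_of_gt (lt_of_lt_of_le hc0 hω.1)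
      have hp1 : 1 - pt ω ≠ 0 := ne_of_gt (by linarith [hω.2])
      simp only [Pi.add_apply, Pi.sub_apply, Pi.mul_apply]
      rw [hρt, hΔY]
      rcases hD01 ω with h | h <;> rw [h] <;> field_simp <;> ring
    refine (condExp_congr_ae hkey).trans ?_
    have h1 := condExp_add (μ := μ) (m := m) (hIa₁.sub hIa₀) hIΦ
    refine h1.trans ?_
    have h2 := condExp_sub (μ := μ) (m := m) hIa₁ hIa₀
    have h3 : μ[(fun ω => (pt ω)⁻¹) * (fun ω => D ω * (ΔY₁ ω - Φ₁ ω)) | m] =ᵐ[μ] 0 := by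
      refine (condExp_mul_of_stronglyMeasurable_left (hptmeas.inv.stronglyMeasurable) hIa₁ hIg₁).trans ?_
      filter_upwards [hΦ₁] with ω hω
      simp [hω]
    have h4 : μ[(fun ω => (1 - pt ω)⁻¹) * (fun ω => (1 - D ω) * (ΔY₀ ω - Φ₀ ω)) | m] =ᵐ[μ] 0 := by
      refine (condExp_mul_of_stronglyMeasurable_left
        ((measurable_const.sub hptmeas).inv.stronglyMeasurable) hIa₀ hIg₀).trans ?_
      filter_upwards [hΦ₀] with ω hω
      simp [hω]
    have h5 : μ[fun ω => Φ₁ ω - Φ₀ ω | m] = fun ω => Φ₁ ω - Φ₀ ω :=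
      condExp_of_stronglyMeasurable (μ := μ) hle (hΦ₁meas.sub hΦ₀meas).stronglyMeasurable hIΦ
    rw [h5]
    filter_upwards [h2, h3, h4] with ω h2 h3 h4
    simp only [Pi.add_apply, Pi.sub_apply] at h2 ⊢
    rw [h2, h3, h4]
    simp
  refine ⟨part1, ?_⟩
  intro hpar
  -- Part 2
  -- auxiliary integrability
  have hIDY₁ : Integrable (fun ω => D ω * ΔY₁ ω) μ := by
    refine intg_of_bdd μ inferInstance ((hDM.mul hY₁M)) C ?_
    filter_upwards with ω
    rw [abs_mul]
    calc |D ω| * |ΔY₁ ω| ≤ 1 * C :=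
          mul_le_mul (hDbd ω) (hbdd₁ ω) (abs_nonneg _) zero_le_one
      _ = C := one_mul _
  have hIDY₀ : Integrable (fun ω => D ω * ΔY₀ ω) μ := by
    refine intg_of_bdd μ inferInstance ((hDM.mul hY₀M)) C ?_
    filter_upwards with ω
    rw [abs_mul]
    calc |D ω| * |ΔY₀ ω| ≤ 1 * C :=
          mul_le_mul (hDbd ω) (hbdd₀ ω) (abs_nonneg _) zero_le_one
      _ = C := one_mul _
  have hIDΦ₁ : Integrable ((fun ω => Φ₁ ω) * fun ω => D ω) μ := by
    refine intg_of_bdd μ inferInstance ((hΦ₁M.mul hDM)) CΦ ?_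
    filter_upwards with ω
    simp only [Pi.mul_apply]
    rw [abs_mul]
    calc |Φ₁ ω| * |D ω| ≤ CΦ * 1 :=
          mul_le_mul (hΦ₁bdd ω) (hDbd ω) (abs_nonneg _)
            (le_trans (abs_nonneg _) (hΦ₁bdd ω))
      _ = CΦ := mul_one _
  have hID : Integrable D μ := by
    refine intg_of_bdd μ inferInstance hDM 1 ?_
    filter_upwards with ω
    exact hDbd ω
  -- E[D ΔY₁ | m] = Φ₁ π
  have hA : μ[fun ω => D ω * ΔY₁ ω | m] =ᵐ[μ] fun ω => Φ₁ ω * π ω := by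
    have e1 : (fun ω => D ω * (ΔY₁ ω - Φ₁ ω)) =
        (fun ω => D ω * ΔY₁ ω) - ((fun ω => Φ₁ ω) * fun ω => D ω) := by
      funext ω; simp only [Pi.sub_apply, Pi.mul_apply]; ring
    have h6 := condExp_sub (μ := μ) (m := m) hIDY₁ hIDΦ₁
    rw [e1] at hΦ₁
    have h7 : μ[(fun ω => Φ₁ ω) * (fun ω => D ω) | m] =ᵐ[μ] (fun ω => Φ₁ ω) * μ[D | m] :=
      condExp_mul_of_stronglyMeasurable_left hΦ₁meas.stronglyMeasurable hIDΦ₁ hID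
    filter_upwards [hΦ₁.symm.trans h6, h7, hπ] with ω h1 h2 h3
    simp only [Pi.sub_apply, Pi.zero_apply, Pi.mul_apply] at h1 h2
    rw [h2, ← h3] at h1
    linarith
  -- E[(1-D) ΔY₀ | m] = Φ₀ (1-π)
  have hI1DY₀ : Integrable (fun ω => (1 - D ω) * ΔY₀ ω) μ := by
    refine intg_of_bdd μ inferInstance (((measurable_const.sub hDM).mul hY₀M)) (2 * C) ?_
    filter_upwards with ω
    rw [abs_mul]
    have h1 : |1 - D ω| ≤ 2 := by rcases hD01 ω with h | h <;> rw [h] <;> norm_num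
    exact mul_le_mul h1 (hbdd₀ ω) (abs_nonneg _) (by norm_num)
  have hI1DΦ₀ : Integrable ((fun ω => Φ₀ ω) * fun ω => 1 - D ω) μ := by
    refine intg_of_bdd μ inferInstance ((hΦ₀M.mul (measurable_const.sub hDM))) (CΦ * 2) ?_
    filter_upwards with ω
    simp only [Pi.mul_apply]
    rw [abs_mul]
    have h1 : |1 - D ω| ≤ 2 := by rcases hD01 ω with h | h <;> rw [h] <;> norm_num
    exact mul_le_mul (hΦ₀bdd ω) h1 (abs_nonneg _) (le_trans (abs_nonneg _) (hΦ₀bdd ω))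
  have hI1D : Integrable (fun ω => 1 - D ω) μ := (integrable_const 1).sub hID
  have h1Dm : μ[fun ω => 1 - D ω | m] =ᵐ[μ] fun ω => 1 - π ω := by
    have e : (fun ω => 1 - D ω) = (fun _ => (1:ℝ)) - D := by funext ω; simp
    rw [e]
    refine (condExp_sub (m := m) (integrable_const 1) hID).trans ?_
    rw [condExp_const (μ := μ) hle]
    filter_upwards [hπ] with ω hω
    simp only [Pi.sub_apply]
    rw [← hω]
  have hB : μ[fun ω => (1 - D ω) * ΔY₀ ω | m] =ᵐ[μ] fun ω => Φ₀ ω * (1 - π ω) := by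
    have e1 : (fun ω => (1 - D ω) * (ΔY₀ ω - Φ₀ ω)) =
        (fun ω => (1 - D ω) * ΔY₀ ω) - ((fun ω => Φ₀ ω) * fun ω => 1 - D ω) := by
      funext ω; simp only [Pi.sub_apply, Pi.mul_apply]; ring
    have h6 := condExp_sub (μ := μ) (m := m) hI1DY₀ hI1DΦ₀
    rw [e1] at hΦ₀
    have h7 : μ[(fun ω => Φ₀ ω) * (fun ω => 1 - D ω) | m] =ᵐ[μ]
        (fun ω => Φ₀ ω) * μ[fun ω => 1 - D ω | m] :=
      condExp_mul_of_stronglyMeasurable_left hΦ₀meas.stronglyMeasurable hI1DΦ₀ hI1D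
    filter_upwards [hΦ₀.symm.trans h6, h7, h1Dm] with ω h1 h2 h3
    simp only [Pi.sub_apply, Pi.zero_apply, Pi.mul_apply] at h1 h2
    rw [h2, h3] at h1
    linarith
  -- parallel trends gives E[D ΔY₀ | m] = Φ₀ π
  have hC' : μ[fun ω => D ω * ΔY₀ ω | m] =ᵐ[μ] fun ω => Φ₀ ω * π ω := by
    filter_upwards [hpar, hB, hπc] with ω h1 h2 h3
    rw [h2] at h1
    have hπ1 : 0 < 1 - π ω := by linarith [h3.2]
    have : ((μ[fun ω' => D ω' * ΔY₀ ω' | m]) ω - Φ₀ ω * π ω) * (1 - π ω) = 0 := by ring_nf; nlinarith [h1]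
    have h4 := mul_eq_zero.1 this
    rcases h4 with h4 | h4
    · linarith
    · linarith
  -- combine
  have hD10 : μ[fun ω' => D ω' * (ΔY₁ ω' - ΔY₀ ω') | m] =ᵐ[μ]
      fun ω => (Φ₁ ω - Φ₀ ω) * π ω := by
    have e : (fun ω => D ω * (ΔY₁ ω - ΔY₀ ω)) =
        (fun ω => D ω * ΔY₁ ω) - fun ω => D ω * ΔY₀ ω := by
      funext ω; simp only [Pi.sub_apply]; ring
    rw [e]
    refine (condExp_sub (m := m) hIDY₁ hIDY₀).trans ?_
    filter_upwards [hA, hC'] with ω h1 h2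
    simp only [Pi.sub_apply]
    rw [h1, h2]; ring
  rw [hτ₀]
  filter_upwards [hD10, hπc] with ω h1 h2
  have hπ0 : π ω ≠ 0 := ne_of_gt (lt_of_lt_of_le hc0 h2.1)
  rw [h1]
  field_simp
end

section
/- Let p̃ be any 𝔪-measurable random variable with c ≤ p̃ ≤ 1−c a.s., and let Φ₁ be a bounded 𝔪-measurable random variable satisfying 𝔼[D·(ΔY₁ − Φ₁) | 𝔪] = 0 a.s. Then almost surely 𝔼[ D·ΔY₁/p̃ − ((D − p̃)/p̃)·Φ₁ | 𝔪 ] = Φ₁; i.e., the augmented treated-group term equals the treated outcome regression even when the propensity score is misspecified. -/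
open MeasureTheory

/-- The augmented treated-group term equals the treated outcome regression even
when the propensity score is misspecified: if `𝔼[D·(ΔY₁ − Φ₁) | 𝔪] = 0` a.s.,
then `𝔼[D·ΔY₁/p̃ − ((D − p̃)/p̃)·Φ₁ | 𝔪] = Φ₁` a.s. -/
theorem augmented_treated_term
    {Ω 𝒲 : Type*} (m : MeasurableSpace Ω) [MeasurableSpace Ω] [m𝒲 : MeasurableSpace 𝒲]
    (μ : Measure Ω) [IsProbabilityMeasure μ]
    (W : Ω → 𝒲) (hW : Measurable W)
    (hmW : m = MeasurableSpace.comap W m𝒲)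
    (hm : m ≤ ‹MeasurableSpace Ω›)
    (D : Ω → ℝ) (hD : Measurable D) (hD01 : ∀ ω, D ω = 0 ∨ D ω = 1)
    (ΔY₁ : Ω → ℝ) (hY₁ : Measurable ΔY₁)
    (C : ℝ) (hbdd₁ : ∀ ω, |ΔY₁ ω| ≤ C)
    (c : ℝ) (hc0 : 0 < c) (hc2 : c < 1 / 2)
    -- possibly misspecified propensity
    (pt : Ω → ℝ) (hptmeas : Measurable[m] pt)
    (hptc : ∀ᵐ ω ∂μ, c ≤ pt ω ∧ pt ω ≤ 1 - c)
    -- correctly specified treated outcome regression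
    (Φ₁ : Ω → ℝ) (hΦ₁meas : Measurable[m] Φ₁)
    (CΦ : ℝ) (hΦ₁bdd : ∀ ω, |Φ₁ ω| ≤ CΦ)
    (hΦ₁ : μ[fun ω => D ω * (ΔY₁ ω - Φ₁ ω) | m] =ᵐ[μ] 0) :
    μ[fun ω => D ω * ΔY₁ ω / pt ω - (D ω - pt ω) / pt ω * Φ₁ ω | m] =ᵐ[μ] Φ₁ := by
  have hm' := (le_of_eq hmW).trans hW.comap_le
  haveI : SigmaFinite (μ.trim hm') := by
    have : IsFiniteMeasure (μ.trim hm') := isFiniteMeasure_trim hm'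
    infer_instance
  have hg_meas : Measurable (fun ω => D ω * (ΔY₁ ω - Φ₁ ω)) :=
    hD.mul (hY₁.sub (hΦ₁meas.mono hm le_rfl))
  have hg_meas' := hg_meas
  have hgbdd : ∀ ω, |D ω * (ΔY₁ ω - Φ₁ ω)| ≤ C + CΦ := by
    intro ω
    have hD1 : |D ω| ≤ 1 := by rcases hD01 ω with h | h <;> simp [h]
    calc |D ω * (ΔY₁ ω - Φ₁ ω)| = |D ω| * |ΔY₁ ω - Φ₁ ω| := abs_mul _ _
      _ ≤ 1 * (|ΔY₁ ω| + |Φ₁ ω|) :=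
          mul_le_mul hD1 (abs_sub _ _) (abs_nonneg _) zero_le_one
      _ ≤ C + CΦ := by simpa using add_le_add (hbdd₁ ω) (hΦ₁bdd ω)
  have hg_int : Integrable (fun ω => D ω * (ΔY₁ ω - Φ₁ ω)) μ :=
    Integrable.mono' (integrable_const (C + CΦ)) hg_meas'.aestronglyMeasurable
      (Filter.Eventually.of_forall hgbdd)
  have hΦ₁int : Integrable Φ₁ μ :=
    Integrable.mono' (integrable_const CΦ)
      (hΦ₁meas.mono hm' le_rfl).aestronglyMeasurable
      (Filter.Eventually.of_forall hΦ₁bdd)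
  have hf_meas : Measurable[m] (fun ω => (pt ω)⁻¹) := hptmeas.inv
  have hfg_int : Integrable (fun ω => (pt ω)⁻¹ * (D ω * (ΔY₁ ω - Φ₁ ω))) μ := by
    refine Integrable.mono' (integrable_const (c⁻¹ * (C + CΦ)))
      (((hf_meas.mono hm' le_rfl).mul hg_meas').aestronglyMeasurable) ?_
    filter_upwards [hptc] with ω hω
    have hpt0 : (0:ℝ) < pt ω := lt_of_lt_of_le hc0 hω.1
    have h1 : |(pt ω)⁻¹| ≤ c⁻¹ := by
      rw [abs_of_nonneg (inv_nonneg.2 hpt0.le)]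
      exact inv_anti₀ hc0 hω.1
    calc |(pt ω)⁻¹ * (D ω * (ΔY₁ ω - Φ₁ ω))|
        = |(pt ω)⁻¹| * |D ω * (ΔY₁ ω - Φ₁ ω)| := abs_mul _ _
      _ ≤ c⁻¹ * (C + CΦ) := by
          apply mul_le_mul h1 (hgbdd ω) (abs_nonneg _)
          positivity
  have key : (fun ω => D ω * ΔY₁ ω / pt ω - (D ω - pt ω) / pt ω * Φ₁ ω)
      =ᵐ[μ] fun ω => (pt ω)⁻¹ * (D ω * (ΔY₁ ω - Φ₁ ω)) + Φ₁ ω := by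
    filter_upwards [hptc] with ω hω
    have hne : pt ω ≠ 0 := ne_of_gt (lt_of_lt_of_le hc0 hω.1)
    field_simp
    ring
  calc μ[fun ω => D ω * ΔY₁ ω / pt ω - (D ω - pt ω) / pt ω * Φ₁ ω | m]
      =ᵐ[μ] μ[fun ω => (pt ω)⁻¹ * (D ω * (ΔY₁ ω - Φ₁ ω)) + Φ₁ ω | m] :=
        condExp_congr_ae key
    _ =ᵐ[μ] μ[fun ω => (pt ω)⁻¹ * (D ω * (ΔY₁ ω - Φ₁ ω)) | m] + μ[Φ₁ | m] :=
        condExp_add hfg_int hΦ₁int m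
    _ =ᵐ[μ] Φ₁ := by
        have h1 : μ[fun ω => (pt ω)⁻¹ * (D ω * (ΔY₁ ω - Φ₁ ω)) | m]
            =ᵐ[μ] fun ω => (pt ω)⁻¹ * (μ[fun ω => D ω * (ΔY₁ ω - Φ₁ ω) | m]) ω :=
          condExp_mul_of_stronglyMeasurable_left hf_meas.stronglyMeasurable hfg_int hg_int
        have h2 : μ[Φ₁ | m] = Φ₁ :=
          condExp_of_stronglyMeasurable hm' hΦ₁meas.stronglyMeasurable hΦ₁int
        filter_upwards [h1, hΦ₁] with ω hω hω0
        simp [Pi.add_apply, hω, h2, hω0]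
end

section
/- Let p̃ be any 𝔪-measurable random variable with c ≤ p̃ ≤ 1−c a.s., and let Φ₀ be a bounded 𝔪-measurable random variable satisfying 𝔼[(1−D)·(ΔY₀ − Φ₀) | 𝔪] = 0 a.s. Then almost surely 𝔼[ (1−D)·ΔY₀/(1−p̃) + ((D − p̃)/(1−p̃))·Φ₀ | 𝔪 ] = Φ₀; i.e., the augmented control-group term equals the control outcome regression even when the propensity score is misspecified. -/
open MeasureTheory

/-- The augmented control-group term equals the control outcome regression even
when the propensity score is misspecified: if `𝔼[(1−D)·(ΔY₀ − Φ₀) | 𝔪] = 0` a.s.,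
then `𝔼[(1−D)·ΔY₀/(1−p̃) + ((D − p̃)/(1−p̃))·Φ₀ | 𝔪] = Φ₀` a.s. -/
theorem augmented_control_term
    {Ω 𝒲 : Type*} (m : MeasurableSpace Ω) [MeasurableSpace Ω] [m𝒲 : MeasurableSpace 𝒲]
    (μ : Measure Ω) [IsProbabilityMeasure μ]
    (W : Ω → 𝒲) (hW : Measurable W)
    (hmW : m = MeasurableSpace.comap W m𝒲)
    (hm : m ≤ ‹MeasurableSpace Ω›)
    (D : Ω → ℝ) (hD : Measurable D) (hD01 : ∀ ω, D ω = 0 ∨ D ω = 1)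
    (ΔY₀ : Ω → ℝ) (hY₀ : Measurable ΔY₀)
    (C : ℝ) (hbdd₀ : ∀ ω, |ΔY₀ ω| ≤ C)
    (c : ℝ) (hc0 : 0 < c) (hc2 : c < 1 / 2)
    -- possibly misspecified propensity
    (pt : Ω → ℝ) (hptmeas : Measurable[m] pt)
    (hptc : ∀ᵐ ω ∂μ, c ≤ pt ω ∧ pt ω ≤ 1 - c)
    -- correctly specified control outcome regression
    (Φ₀ : Ω → ℝ) (hΦ₀meas : Measurable[m] Φ₀)
    (CΦ : ℝ) (hΦ₀bdd : ∀ ω, |Φ₀ ω| ≤ CΦ)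
    (hΦ₀ : μ[fun ω => (1 - D ω) * (ΔY₀ ω - Φ₀ ω) | m] =ᵐ[μ] 0) :
    μ[fun ω => (1 - D ω) * ΔY₀ ω / (1 - pt ω) + (D ω - pt ω) / (1 - pt ω) * Φ₀ ω | m]
      =ᵐ[μ] Φ₀ := by
  rename_i instΩ instP
  have hle : m ≤ instΩ := hmW ▸ hW.comap_le
  set f : Ω → ℝ := fun ω => (1 - pt ω)⁻¹ with hf
  set g : Ω → ℝ := fun ω => (1 - D ω) * (ΔY₀ ω - Φ₀ ω) with hg
  have hfmeas : Measurable[m] f := (measurable_const.sub hptmeas).inv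
  have hΦ₀M : Measurable[instΩ] Φ₀ := hΦ₀meas.mono hle le_rfl
  have hfM : Measurable[instΩ] f := hfmeas.mono hle le_rfl
  have hgm : Measurable[instΩ] g := (measurable_const.sub hD).mul (hY₀.sub hΦ₀M)
  have hgmeas : Measurable[instΩ] g := hgm
  -- a.e. bounds
  have hfbdd : ∀ᵐ ω ∂μ, ‖f ω‖ ≤ c⁻¹ := by
    filter_upwards [hptc] with ω ⟨h1, h2⟩
    have hpos : c ≤ 1 - pt ω := by linarith
    have h0 : (0:ℝ) < 1 - pt ω := lt_of_lt_of_le hc0 hpos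
    rw [Real.norm_eq_abs, abs_inv, abs_of_pos h0]
    exact inv_anti₀ hc0 hpos
  have hgbdd : ∀ ω, ‖g ω‖ ≤ 1 * (C + CΦ) := by
    intro ω
    show ‖(1 - D ω) * (ΔY₀ ω - Φ₀ ω)‖ ≤ _
    have h1 : |1 - D ω| ≤ 1 := by rcases hD01 ω with h | h <;> simp [h]
    have h2 : |ΔY₀ ω - Φ₀ ω| ≤ C + CΦ :=
      (abs_sub _ _).trans (add_le_add (hbdd₀ ω) (hΦ₀bdd ω))
    calc ‖(1 - D ω) * (ΔY₀ ω - Φ₀ ω)‖ = |1 - D ω| * |ΔY₀ ω - Φ₀ ω| := abs_mul _ _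
      _ ≤ 1 * (C + CΦ) := mul_le_mul h1 h2 (abs_nonneg _) zero_le_one
  have hgint : Integrable g μ :=
    (integrable_const (1 * (C + CΦ))).mono' hgmeas.aestronglyMeasurable
      (Filter.Eventually.of_forall hgbdd)
  have hfgint : Integrable (f * g) μ := by
    refine (integrable_const (c⁻¹ * (1 * (C + CΦ)))).mono'
      (hfM.aestronglyMeasurable.mul hgmeas.aestronglyMeasurable) ?_
    filter_upwards [hfbdd] with ω hfω
    calc ‖(f * g) ω‖ = ‖f ω‖ * ‖g ω‖ := norm_mul _ _
      _ ≤ c⁻¹ * (1 * (C + CΦ)) :=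
        mul_le_mul hfω (hgbdd ω) (norm_nonneg _) (inv_nonneg.2 hc0.le)
  have hΦ₀int : Integrable Φ₀ μ :=
    (integrable_const CΦ).mono' hΦ₀M.aestronglyMeasurable
      (Filter.Eventually.of_forall hΦ₀bdd)
  -- rewrite the integrand a.e.
  have heq : (fun ω => (1 - D ω) * ΔY₀ ω / (1 - pt ω) + (D ω - pt ω) / (1 - pt ω) * Φ₀ ω)
      =ᵐ[μ] (f * g + Φ₀) := by
    filter_upwards [hptc] with ω ⟨h1, h2⟩
    have h0 : (1:ℝ) - pt ω ≠ 0 := by intro h; linarith [hc0]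
    simp only [Pi.add_apply, Pi.mul_apply, hf, hg]
    field_simp
    ring
  calc μ[fun ω => (1 - D ω) * ΔY₀ ω / (1 - pt ω) + (D ω - pt ω) / (1 - pt ω) * Φ₀ ω | m]
      =ᵐ[μ] μ[f * g + Φ₀ | m] := condExp_congr_ae heq
    _ =ᵐ[μ] μ[f * g | m] + μ[Φ₀ | m] := condExp_add hfgint hΦ₀int m
    _ =ᵐ[μ] f * μ[g | m] + μ[Φ₀ | m] :=
        (condExp_mul_of_stronglyMeasurable_left hfmeas.stronglyMeasurable hfgint hgint).add
          (Filter.EventuallyEq.refl _ _)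
    _ =ᵐ[μ] f * 0 + Φ₀ := by
        refine Filter.EventuallyEq.add ?_ ?_
        · exact Filter.EventuallyEq.mul (Filter.EventuallyEq.refl _ _) hΦ₀
        · exact Filter.EventuallyEq.of_eq
            (condExp_of_stronglyMeasurable (μ := μ) hle hΦ₀meas.stronglyMeasurable hΦ₀int)
    _ =ᵐ[μ] Φ₀ := by simp
end

section
/- (Neyman orthogonality.) Let Φ₁⁰, Φ₀⁰ be bounded 𝔪-measurable random variables with 𝔼[D·(ΔY₁ − Φ₁⁰) | 𝔪] = 0 a.s. and 𝔼[(1−D)·(ΔY₀ − Φ₀⁰) | 𝔪] = 0 a.s., and let π be 𝔪-measurable with π = 𝔼[D | 𝔪] a.s. and c ≤ π ≤ 1−c a.s. Let (Φ₁, Φ₀, p) be any other triple of bounded 𝔪-measurable random variables with c ≤ p ≤ 1−c a.s. For r ∈ [0,1] define the perturbed nuisances Φ₁ʳ = Φ₁⁰ + r(Φ₁ − Φ₁⁰), Φ₀ʳ = Φ₀⁰ + r(Φ₀ − Φ₀⁰), πʳ = π + r(p − π), and the score Υʳ := ((D − πʳ)/(πʳ(1 − πʳ)))·(ΔY − (1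 − πʳ)·Φ₁ʳ − πʳ·Φ₀ʳ). Then for every bounded 𝔪-measurable random variable h, the function r ↦ 𝔼[Υʳ·h] is differentiable at r = 0 with derivative equal to 0. -/
open MeasureTheory

private lemma score_decomp (DD y1 y0 P p0 φ10 φ00 φ1 φ0 hh r : ℝ)
    (hD : DD = 0 ∨ DD = 1)
    (hq0 : P + r * (p0 - P) ≠ 0) (hq1 : 1 - (P + r * (p0 - P)) ≠ 0) :
    (DD - (P + r * (p0 - P))) / ((P + r * (p0 - P)) * (1 - (P + r * (p0 - P)))) *
      ((DD * y1 + (1 - DD) * y0) - (1 - (P + r * (p0 - P))) * (φ10 + r * (φ1 - φ10))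
        - (P + r * (p0 - P)) * (φ00 + r * (φ0 - φ00))) * hh
    = hh / (P + r * (p0 - P)) * (DD * (y1 - φ10))
      - hh / (1 - (P + r * (p0 - P))) * ((1 - DD) * (y0 - φ00))
      + (-(r * hh * ((φ1 - φ10) / (P + r * (p0 - P)) + (φ0 - φ00) / (1 - (P + r * (p0 - P)))))) * (DD - P)
      + (hh * (φ10 - φ00) + r^2 * (hh * (p0 - P) * ((φ1 - φ10) / (P + r * (p0 - P)) + (φ0 - φ00) / (1 - (P + r * (p0 - P)))))) := by
  rcases hD with h | h <;> subst h <;> field_simp <;> ring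

private lemma integral_mul_eq_zero' {Ω : Type*} {inst : MeasurableSpace Ω} {μ : @MeasureTheory.Measure Ω inst}
    [IsProbabilityMeasure μ] {m : MeasurableSpace Ω} (hm : m ≤ inst)
    {g X : Ω → ℝ} (hg : StronglyMeasurable[m] g) {Mg : ℝ}
    (hgb : ∀ᵐ ω ∂μ, ‖g ω‖ ≤ Mg) (hX : Integrable X μ)
    (hXc : μ[X|m] =ᵐ[μ] 0) : ∫ ω, g ω * X ω ∂μ = 0 := by
  have hgm : AEStronglyMeasurable[inst] g μ := (hg.mono hm).aestronglyMeasurable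
  have hgX : Integrable (g * X) μ := hX.bdd_mul hgm hgb
  have h1 : μ[g * X|m] =ᵐ[μ] 0 :=
    (condExp_mul_of_stronglyMeasurable_left hg hgX hX).trans
      (by filter_upwards [hXc] with ω hω; simp only [Pi.mul_apply, Pi.zero_apply] at *; simp [hω])
  calc ∫ ω, g ω * X ω ∂μ = ∫ ω, (μ[g * X|m]) ω ∂μ := (integral_condExp hm).symm
    _ = 0 := by rw [integral_congr_ae h1]; simp

private lemma q_bounds' (P p0 r c : ℝ) (hc : 0 < c) (h1 : c ≤ P) (h2 : P ≤ 1 - c)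
    (h3 : c ≤ p0) (h4 : p0 ≤ 1 - c) (hr : |r| ≤ c / 2) :
    c / 2 ≤ P + r * (p0 - P) ∧ P + r * (p0 - P) ≤ 1 - c / 2 := by
  have hδ : |p0 - P| ≤ 1 := by rw [abs_le]; constructor <;> linarith
  have h5 : |r * (p0 - P)| ≤ c / 2 := by
    rw [abs_mul]
    calc |r| * |p0 - P| ≤ c / 2 * 1 := mul_le_mul hr hδ (abs_nonneg _) (by linarith)
      _ = c / 2 := mul_one _
  rw [abs_le] at h5
  constructor <;> linarith [h5.1, h5.2]

private lemma sum_div_bound' (x u v d K : ℝ) (hd : 0 < d) (hK : 0 ≤ K) (h1 : d ≤ x)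
    (h2 : x ≤ 1 - d) (hu : |u| ≤ K) (hv : |v| ≤ K) :
    |u / x + v / (1 - x)| ≤ 2 * (K / d) := by
  have hx : 0 < x := lt_of_lt_of_le hd h1
  have hx1 : 0 < 1 - x := by linarith
  have e1 : |u / x| ≤ K / d := by
    rw [abs_div, abs_of_pos hx]; exact div_le_div₀ hK hu hd h1
  have e2 : |v / (1 - x)| ≤ K / d := by
    rw [abs_div, abs_of_pos hx1]; exact div_le_div₀ hK hv hd (by linarith)
  calc |u / x + v / (1 - x)| ≤ |u / x| + |v / (1 - x)| := abs_add_le _ _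
    _ ≤ 2 * (K / d) := by linarith

private lemma abs_mul3_le' (a b s Ca Cb Cs : ℝ) (ha : |a| ≤ Ca) (hb : |b| ≤ Cb)
    (hs : |s| ≤ Cs) (hCa : 0 ≤ Ca) (hCb : 0 ≤ Cb) : |a * b * s| ≤ Ca * Cb * Cs := by
  rw [abs_mul, abs_mul]
  exact mul_le_mul (mul_le_mul ha hb (abs_nonneg _) hCa) hs (abs_nonneg _) (by positivity)

private lemma aux_ub' (x d : ℝ) (hd : 0 < d) (h : x ≤ 1 - d) : d ≤ 1 - x := by linarith

/-- Neyman orthogonality of the doubly robust DiD score: at the true nuisances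
`(Φ₁⁰, Φ₀⁰, π)`, the pathwise derivative of `r ↦ 𝔼[Υʳ·h]` towards any other
bounded triple of nuisance values vanishes at `r = 0`, for every bounded
𝔪-measurable `h`. -/
theorem neyman_orthogonality
    {Ω 𝒲 : Type*} (m : MeasurableSpace Ω) [MeasurableSpace Ω] [m𝒲 : MeasurableSpace 𝒲]
    (μ : Measure Ω) [IsProbabilityMeasure μ]
    (W : Ω → 𝒲) (hW : Measurable W)
    (hmW : m = MeasurableSpace.comap W m𝒲)
    (hm : m ≤ ‹MeasurableSpace Ω›)
    (D : Ω → ℝ) (hD : Measurable D) (hD01 : ∀ ω, D ω = 0 ∨ D ω = 1)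
    (ΔY₁ ΔY₀ : Ω → ℝ) (hY₁ : Measurable ΔY₁) (hY₀ : Measurable ΔY₀)
    (C : ℝ) (hbdd₁ : ∀ ω, |ΔY₁ ω| ≤ C) (hbdd₀ : ∀ ω, |ΔY₀ ω| ≤ C)
    (ΔY : Ω → ℝ) (hΔY : ∀ ω, ΔY ω = D ω * ΔY₁ ω + (1 - D ω) * ΔY₀ ω)
    (c : ℝ) (hc0 : 0 < c) (hc2 : c < 1 / 2)
    -- true nuisances
    (π : Ω → ℝ) (hπmeas : Measurable[m] π)
    (hπ : π =ᵐ[μ] μ[D | m])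
    (hπc : ∀ᵐ ω ∂μ, c ≤ π ω ∧ π ω ≤ 1 - c)
    (Φ₁0 Φ₀0 : Ω → ℝ) (hΦ₁0meas : Measurable[m] Φ₁0) (hΦ₀0meas : Measurable[m] Φ₀0)
    (C0 : ℝ) (hΦ₁0bdd : ∀ ω, |Φ₁0 ω| ≤ C0) (hΦ₀0bdd : ∀ ω, |Φ₀0 ω| ≤ C0)
    (hΦ₁0 : μ[fun ω => D ω * (ΔY₁ ω - Φ₁0 ω) | m] =ᵐ[μ] 0)
    (hΦ₀0 : μ[fun ω => (1 - D ω) * (ΔY₀ ω - Φ₀0 ω) | m] =ᵐ[μ] 0)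
    -- perturbation directions: any other triple of bounded 𝔪-measurable nuisances
    (Φ₁ Φ₀ p : Ω → ℝ)
    (hΦ₁meas : Measurable[m] Φ₁) (hΦ₀meas : Measurable[m] Φ₀) (hpmeas : Measurable[m] p)
    (C1 : ℝ) (hΦ₁bdd : ∀ ω, |Φ₁ ω| ≤ C1) (hΦ₀bdd : ∀ ω, |Φ₀ ω| ≤ C1)
    (hpc : ∀ᵐ ω ∂μ, c ≤ p ω ∧ p ω ≤ 1 - c)
    -- the perturbed score
    (Υ : ℝ → Ω → ℝ)
    (hΥ : ∀ r ω, Υ r ω =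
      (D ω - (π ω + r * (p ω - π ω))) /
          ((π ω + r * (p ω - π ω)) * (1 - (π ω + r * (p ω - π ω)))) *
        (ΔY ω - (1 - (π ω + r * (p ω - π ω))) * (Φ₁0 ω + r * (Φ₁ ω - Φ₁0 ω))
          - (π ω + r * (p ω - π ω)) * (Φ₀0 ω + r * (Φ₀ ω - Φ₀0 ω))))
    -- any bounded 𝔪-measurable test function
    (h : Ω → ℝ) (hhmeas : Measurable[m] h) (Ch : ℝ) (hhbdd : ∀ ω, |h ω| ≤ Ch) :
    HasDerivWithinAt (fun r : ℝ => ∫ ω, Υ r ω * h ω ∂μ) 0 (Set.Icc 0 1) 0 := by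
  classical
  -- the genuine fact `m ≤ ambient σ-algebra`
  have hm' := hW.comap_le
  rw [← hmW] at hm'
  -- Ω is nonempty, hence the bounding constants are nonnegative
  have hΩ : Nonempty Ω := by
    by_contra hne
    rw [not_nonempty_iff] at hne
    have h1 : μ Set.univ = 1 := measure_univ
    rw [Set.univ_eq_empty_iff.mpr hne] at h1
    simp at h1
  obtain ⟨ω₀⟩ := hΩ
  have hCh : 0 ≤ Ch := (abs_nonneg _).trans (hhbdd ω₀)
  have hC : 0 ≤ C := (abs_nonneg _).trans (hbdd₁ ω₀)
  have hC0 : 0 ≤ C0 := (abs_nonneg _).trans (hΦ₁0bdd ω₀)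
  have hC1 : 0 ≤ C1 := (abs_nonneg _).trans (hΦ₁bdd ω₀)
  have hc0' : (0:ℝ) < c / 2 := by linarith
  -- transfer m-measurability to a.e. strong measurability w.r.t. μ
  have toAE : ∀ f : Ω → ℝ, Measurable[m] f → _ := fun f hf =>
    ((hf.mono hm' le_rfl).stronglyMeasurable).aestronglyMeasurable (μ := μ)
  -- notation
  set q : ℝ → Ω → ℝ := fun r ω => π ω + r * (p ω - π ω) with hqdef
  set R : ℝ → Ω → ℝ := fun r ω =>
    h ω * (p ω - π ω) * ((Φ₁ ω - Φ₁0 ω) / q r ω + (Φ₀ ω - Φ₀0 ω) / (1 - q r ω)) with hRdef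
  set A : ℝ := ∫ ω, h ω * (Φ₁0 ω - Φ₀0 ω) ∂μ with hAdef
  set K : ℝ := 2 * ((C1 + C0) / (c / 2)) with hKdef
  have hK : 0 ≤ K := by rw [hKdef]; positivity
  set M : ℝ := Ch * 1 * K with hMdef
  have hqm : ∀ r : ℝ, Measurable[m] (q r) := fun r =>
    hπmeas.add (measurable_const.mul (hpmeas.sub hπmeas))
  -- a.e. bounds on q r for |r| ≤ c/2
  have hqb : ∀ r : ℝ, |r| ≤ c / 2 → ∀ᵐ ω ∂μ, c / 2 ≤ q r ω ∧ q r ω ≤ 1 - c / 2 := by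
    intro r hr
    filter_upwards [hπc, hpc] with ω h1 h2
    exact q_bounds' (π ω) (p ω) r c hc0 h1.1 h1.2 h2.1 h2.2 hr
  -- a.e. bound on the division sum
  have hsum : ∀ r : ℝ, |r| ≤ c / 2 → ∀ᵐ ω ∂μ,
      |(Φ₁ ω - Φ₁0 ω) / q r ω + (Φ₀ ω - Φ₀0 ω) / (1 - q r ω)| ≤ K := by
    intro r hr
    filter_upwards [hqb r hr] with ω hω
    exact sum_div_bound' (q r ω) (Φ₁ ω - Φ₁0 ω) (Φ₀ ω - Φ₀0 ω) (c / 2) (C1 + C0)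
      hc0' (by positivity) hω.1 hω.2
      ((abs_sub _ _).trans (add_le_add (hΦ₁bdd ω) (hΦ₁0bdd ω)))
      ((abs_sub _ _).trans (add_le_add (hΦ₀bdd ω) (hΦ₀0bdd ω)))
  -- integrability of the "noise" pieces
  have hX₁ : Integrable (fun ω => D ω * (ΔY₁ ω - Φ₁0 ω)) μ := by
    refine Integrable.mono' (integrable_const (C + C0))
      ((hD.mul (hY₁.sub (hΦ₁0meas.mono hm' le_rfl))).aestronglyMeasurable) ?_
    filter_upwards with ω
    rcases hD01 ω with h0 | h1
    · simp only [h0, zero_mul, norm_zero]; positivity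
    · simp only [h1, one_mul, Real.norm_eq_abs]
      exact (abs_sub _ _).trans (add_le_add (hbdd₁ ω) (hΦ₁0bdd ω))
  have hX₂ : Integrable (fun ω => (1 - D ω) * (ΔY₀ ω - Φ₀0 ω)) μ := by
    refine Integrable.mono' (integrable_const (C + C0))
      (((measurable_const.sub hD).mul (hY₀.sub (hΦ₀0meas.mono hm' le_rfl))).aestronglyMeasurable) ?_
    filter_upwards with ω
    rcases hD01 ω with h0 | h1
    · simp only [h0, sub_zero, one_mul, Real.norm_eq_abs]
      exact (abs_sub _ _).trans (add_le_add (hbdd₀ ω) (hΦ₀0bdd ω))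
    · simp only [h1, sub_self, zero_mul, norm_zero]; positivity
  have hπint : Integrable π μ := by
    refine Integrable.mono' (integrable_const (1:ℝ)) (toAE _ hπmeas) ?_
    filter_upwards [hπc] with ω hω
    rw [Real.norm_eq_abs, abs_le]
    refine ⟨by linarith [hω.1], by linarith [hω.2]⟩
  have hDint : Integrable D μ := by
    refine Integrable.mono' (integrable_const (1:ℝ)) hD.aestronglyMeasurable ?_
    filter_upwards with ω
    rcases hD01 ω with h0 | h0 <;> simp [h0]
  have hX₃ : Integrable (fun ω => D ω - π ω) μ := hDint.sub hπint
  have hX₃c : μ[fun ω => D ω - π ω|m] =ᵐ[μ] 0 := by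
    have h1 : μ[D - π|m] =ᵐ[μ] μ[D|m] - μ[π|m] := condExp_sub hDint hπint m
    have h2 : μ[π|m] = π := condExp_of_stronglyMeasurable hm' hπmeas.stronglyMeasurable hπint
    have h3 : (fun ω => D ω - π ω) = D - π := rfl
    rw [h3]
    refine h1.trans ?_
    rw [h2]
    filter_upwards [hπ] with ω hω
    simp only [Pi.sub_apply, Pi.zero_apply, ← hω]
    ring
  -- Key identity : for |r| ≤ c/2, the integral equals A + r² ∫ R r
  have key : ∀ r : ℝ, |r| ≤ c / 2 →
      ∫ ω, Υ r ω * h ω ∂μ = A + r ^ 2 * ∫ ω, R r ω ∂μ := by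
    intro r hr
    have hg₁ : StronglyMeasurable[m] (fun ω => h ω / q r ω) :=
      (hhmeas.div (hqm r)).stronglyMeasurable
    have hg₂ : StronglyMeasurable[m] (fun ω => h ω / (1 - q r ω)) :=
      (hhmeas.div (measurable_const.sub (hqm r))).stronglyMeasurable
    have hg₃ : StronglyMeasurable[m] (fun ω =>
        -(r * h ω * ((Φ₁ ω - Φ₁0 ω) / q r ω + (Φ₀ ω - Φ₀0 ω) / (1 - q r ω)))) := by
      apply Measurable.stronglyMeasurable
      exact ((measurable_const.mul hhmeas).mul
        (((hΦ₁meas.sub hΦ₁0meas).div (hqm r)).add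
          ((hΦ₀meas.sub hΦ₀0meas).div (measurable_const.sub (hqm r))))).neg
    have hb₁ : ∀ᵐ ω ∂μ, ‖h ω / q r ω‖ ≤ Ch / (c / 2) := by
      filter_upwards [hqb r hr] with ω hω
      rw [Real.norm_eq_abs, abs_div, abs_of_pos (lt_of_lt_of_le hc0' hω.1)]
      exact div_le_div₀ hCh (hhbdd ω) hc0' hω.1
    have hb₂ : ∀ᵐ ω ∂μ, ‖h ω / (1 - q r ω)‖ ≤ Ch / (c / 2) := by
      filter_upwards [hqb r hr] with ω hω
      have hub : c / 2 ≤ 1 - q r ω := aux_ub' (q r ω) (c / 2) hc0' hω.2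
      rw [Real.norm_eq_abs, abs_div, abs_of_pos (lt_of_lt_of_le hc0' hub)]
      exact div_le_div₀ hCh (hhbdd ω) hc0' hub
    have hb₃ : ∀ᵐ ω ∂μ, ‖(fun ω =>
        -(r * h ω * ((Φ₁ ω - Φ₁0 ω) / q r ω + (Φ₀ ω - Φ₀0 ω) / (1 - q r ω)))) ω‖
        ≤ c / 2 * Ch * K := by
      filter_upwards [hsum r hr] with ω hω
      rw [Real.norm_eq_abs, abs_neg]
      exact abs_mul3_le' r (h ω) _ (c / 2) Ch K hr (hhbdd ω) hω (le_of_lt hc0') hCh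
    -- the a.e. decomposition of the integrand
    have hdec : (fun ω => Υ r ω * h ω) =ᵐ[μ] fun ω =>
        (h ω / q r ω) * (D ω * (ΔY₁ ω - Φ₁0 ω))
        - (h ω / (1 - q r ω)) * ((1 - D ω) * (ΔY₀ ω - Φ₀0 ω))
        + (-(r * h ω * ((Φ₁ ω - Φ₁0 ω) / q r ω + (Φ₀ ω - Φ₀0 ω) / (1 - q r ω)))) * (D ω - π ω)
        + (h ω * (Φ₁0 ω - Φ₀0 ω) + r ^ 2 * R r ω) := by
      filter_upwards [hqb r hr] with ω hω
      have hq0 : q r ω ≠ 0 := ne_of_gt (lt_of_lt_of_le hc0' hω.1)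
      have hq1 : 1 - q r ω ≠ 0 :=
        ne_of_gt (lt_of_lt_of_le hc0' (aux_ub' (q r ω) (c / 2) hc0' hω.2))
      rw [hΥ, hΔY]
      exact score_decomp (D ω) (ΔY₁ ω) (ΔY₀ ω) (π ω) (p ω) (Φ₁0 ω) (Φ₀0 ω) (Φ₁ ω)
        (Φ₀ ω) (h ω) r (hD01 ω) hq0 hq1
    -- integrability of each piece
    have hi₁ : Integrable (fun ω => (h ω / q r ω) * (D ω * (ΔY₁ ω - Φ₁0 ω))) μ :=
      hX₁.bdd_mul ((hg₁.mono hm').aestronglyMeasurable) hb₁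
    have hi₂ : Integrable (fun ω => (h ω / (1 - q r ω)) * ((1 - D ω) * (ΔY₀ ω - Φ₀0 ω))) μ :=
      hX₂.bdd_mul ((hg₂.mono hm').aestronglyMeasurable) hb₂
    have hi₃ : Integrable (fun ω =>
        (-(r * h ω * ((Φ₁ ω - Φ₁0 ω) / q r ω + (Φ₀ ω - Φ₀0 ω) / (1 - q r ω)))) * (D ω - π ω)) μ :=
      hX₃.bdd_mul ((hg₃.mono hm').aestronglyMeasurable) hb₃
    have hRint : Integrable (R r) μ := by
      refine Integrable.mono' (integrable_const M)
        (toAE _ ((hhmeas.mul (hpmeas.sub hπmeas)).mul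
          (((hΦ₁meas.sub hΦ₁0meas).div (hqm r)).add
            ((hΦ₀meas.sub hΦ₀0meas).div (measurable_const.sub (hqm r)))))) ?_
      filter_upwards [hsum r hr, hπc, hpc] with ω hω h1 h2
      have hδ : |p ω - π ω| ≤ 1 := by
        rw [abs_le]
        refine ⟨by linarith [h1.2, h2.1], by linarith [h1.1, h2.2]⟩
      rw [Real.norm_eq_abs, hMdef]
      exact abs_mul3_le' (h ω) (p ω - π ω) _ Ch 1 K (hhbdd ω) hδ hω hCh zero_le_one
    have hmart : Integrable (fun ω => h ω * (Φ₁0 ω - Φ₀0 ω)) μ := by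
      refine Integrable.mono' (integrable_const (Ch * (C0 + C0)))
        (toAE _ (hhmeas.mul (hΦ₁0meas.sub hΦ₀0meas))) ?_
      filter_upwards with ω
      rw [Real.norm_eq_abs, abs_mul]
      exact mul_le_mul (hhbdd ω)
        ((abs_sub _ _).trans (add_le_add (hΦ₁0bdd ω) (hΦ₀0bdd ω))) (abs_nonneg _) hCh
    have hi₄ : Integrable (fun ω => h ω * (Φ₁0 ω - Φ₀0 ω) + r ^ 2 * R r ω) μ :=
      hmart.add (hRint.const_mul _)
    -- the three "orthogonality" integrals vanish
    have z₁ : ∫ ω, (h ω / q r ω) * (D ω * (ΔY₁ ω - Φ₁0 ω)) ∂μ = 0 :=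
      integral_mul_eq_zero' hm' hg₁ hb₁ hX₁ hΦ₁0
    have z₂ : ∫ ω, (h ω / (1 - q r ω)) * ((1 - D ω) * (ΔY₀ ω - Φ₀0 ω)) ∂μ = 0 :=
      integral_mul_eq_zero' hm' hg₂ hb₂ hX₂ hΦ₀0
    have z₃ : ∫ ω, (-(r * h ω * ((Φ₁ ω - Φ₁0 ω) / q r ω + (Φ₀ ω - Φ₀0 ω) / (1 - q r ω))))
        * (D ω - π ω) ∂μ = 0 :=
      integral_mul_eq_zero' hm' hg₃ hb₃ hX₃ hX₃c
    have e1 : ∫ ω, ((h ω / q r ω) * (D ω * (ΔY₁ ω - Φ₁0 ω))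
          - (h ω / (1 - q r ω)) * ((1 - D ω) * (ΔY₀ ω - Φ₀0 ω))
          + (-(r * h ω * ((Φ₁ ω - Φ₁0 ω) / q r ω + (Φ₀ ω - Φ₀0 ω) / (1 - q r ω)))) * (D ω - π ω)
          + (h ω * (Φ₁0 ω - Φ₀0 ω) + r ^ 2 * R r ω)) ∂μ
        = (∫ ω, ((h ω / q r ω) * (D ω * (ΔY₁ ω - Φ₁0 ω))
          - (h ω / (1 - q r ω)) * ((1 - D ω) * (ΔY₀ ω - Φ₀0 ω))
          + (-(r * h ω * ((Φ₁ ω - Φ₁0 ω) / q r ω + (Φ₀ ω - Φ₀0 ω) / (1 - q r ω)))) * (D ω - π ω)) ∂μ)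
          + ∫ ω, (h ω * (Φ₁0 ω - Φ₀0 ω) + r ^ 2 * R r ω) ∂μ :=
      integral_add ((hi₁.sub hi₂).add hi₃) hi₄
    have e2 : ∫ ω, ((h ω / q r ω) * (D ω * (ΔY₁ ω - Φ₁0 ω))
          - (h ω / (1 - q r ω)) * ((1 - D ω) * (ΔY₀ ω - Φ₀0 ω))
          + (-(r * h ω * ((Φ₁ ω - Φ₁0 ω) / q r ω + (Φ₀ ω - Φ₀0 ω) / (1 - q r ω)))) * (D ω - π ω)) ∂μ
        = (∫ ω, ((h ω / q r ω) * (D ω * (ΔY₁ ω - Φ₁0 ω))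
          - (h ω / (1 - q r ω)) * ((1 - D ω) * (ΔY₀ ω - Φ₀0 ω))) ∂μ)
          + ∫ ω, (-(r * h ω * ((Φ₁ ω - Φ₁0 ω) / q r ω + (Φ₀ ω - Φ₀0 ω) / (1 - q r ω))))
              * (D ω - π ω) ∂μ :=
      integral_add (hi₁.sub hi₂) hi₃
    have e3 : ∫ ω, ((h ω / q r ω) * (D ω * (ΔY₁ ω - Φ₁0 ω))
          - (h ω / (1 - q r ω)) * ((1 - D ω) * (ΔY₀ ω - Φ₀0 ω))) ∂μ
        = (∫ ω, (h ω / q r ω) * (D ω * (ΔY₁ ω - Φ₁0 ω)) ∂μ)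
          - ∫ ω, (h ω / (1 - q r ω)) * ((1 - D ω) * (ΔY₀ ω - Φ₀0 ω)) ∂μ :=
      integral_sub hi₁ hi₂
    have e4 : ∫ ω, (h ω * (Φ₁0 ω - Φ₀0 ω) + r ^ 2 * R r ω) ∂μ
        = (∫ ω, h ω * (Φ₁0 ω - Φ₀0 ω) ∂μ) + ∫ ω, r ^ 2 * R r ω ∂μ :=
      integral_add hmart (hRint.const_mul _)
    have e5 : ∫ ω, r ^ 2 * R r ω ∂μ = r ^ 2 * ∫ ω, R r ω ∂μ := integral_const_mul _ _
    calc ∫ ω, Υ r ω * h ω ∂μ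
        = ∫ ω, ((h ω / q r ω) * (D ω * (ΔY₁ ω - Φ₁0 ω))
          - (h ω / (1 - q r ω)) * ((1 - D ω) * (ΔY₀ ω - Φ₀0 ω))
          + (-(r * h ω * ((Φ₁ ω - Φ₁0 ω) / q r ω + (Φ₀ ω - Φ₀0 ω) / (1 - q r ω)))) * (D ω - π ω)
          + (h ω * (Φ₁0 ω - Φ₀0 ω) + r ^ 2 * R r ω)) ∂μ := integral_congr_ae hdec
      _ = A + r ^ 2 * ∫ ω, R r ω ∂μ := by
          rw [e1, e2, e3, e4, e5, z₁, z₂, z₃, hAdef]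
          ring
  -- uniform bound on ∫ R r
  have hRb : ∀ r : ℝ, |r| ≤ c / 2 → |∫ ω, R r ω ∂μ| ≤ M := by
    intro r hr
    have hbound : ∀ᵐ ω ∂μ, ‖R r ω‖ ≤ M := by
      filter_upwards [hsum r hr, hπc, hpc] with ω hω h1 h2
      have hδ : |p ω - π ω| ≤ 1 := by
        rw [abs_le]
        refine ⟨by linarith [h1.2, h2.1], by linarith [h1.1, h2.2]⟩
      rw [Real.norm_eq_abs, hMdef]
      exact abs_mul3_le' (h ω) (p ω - π ω) _ Ch 1 K (hhbdd ω) hδ hω hCh zero_le_one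
    rw [← Real.norm_eq_abs]
    calc ‖∫ ω, R r ω ∂μ‖ ≤ M * (μ Set.univ).toReal :=
          norm_integral_le_of_norm_le_const hbound
      _ = M := by simp
  -- value at 0
  have hF0 : ∫ ω, Υ 0 ω * h ω ∂μ = A := by
    have h0 : |(0:ℝ)| ≤ c / 2 := by
      rw [abs_zero]; linarith
    have := key 0 h0
    simpa using this
  -- the derivative
  have hDeriv : HasDerivAt (fun r : ℝ => ∫ ω, Υ r ω * h ω ∂μ) 0 0 := by
    rw [hasDerivAt_iff_isLittleO]
    simp only [sub_zero, smul_zero, sub_zero]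
    have h1 : (fun r : ℝ => (∫ ω, Υ r ω * h ω ∂μ) - ∫ ω, Υ 0 ω * h ω ∂μ)
        =O[nhds 0] fun r : ℝ => r ^ 2 := by
      rw [Asymptotics.isBigO_iff]
      refine ⟨M, ?_⟩
      have hev : ∀ᶠ r : ℝ in nhds 0, |r| ≤ c / 2 := by
        filter_upwards [eventually_abs_sub_lt (0:ℝ) hc0'] with r hr
        rw [sub_zero] at hr
        exact le_of_lt hr
      filter_upwards [hev] with r hr
      rw [key r hr, hF0]
      simp only [add_sub_cancel_left]
      rw [Real.norm_eq_abs, Real.norm_eq_abs, abs_mul]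
      calc |r ^ 2| * |∫ ω, R r ω ∂μ| ≤ |r ^ 2| * M :=
            mul_le_mul_of_nonneg_left (hRb r hr) (abs_nonneg _)
        _ = M * |r ^ 2| := by ring
    have h2 : (fun r : ℝ => r ^ 2) =o[nhds 0] fun r : ℝ => r := by
      simpa using Asymptotics.isLittleO_pow_pow (𝕜 := ℝ) one_lt_two
    exact h1.trans_isLittleO h2
  exact hDeriv.hasDerivWithinAt
end

section
/- (Deterministic Lasso oracle bound.) Let p ≥ 1, S₀ ⊆ {1,…,p} with |S₀| = s₀ ≥ 1, let β₀ ∈ ℝᵖ be supported on S₀, let β̂ ∈ ℝᵖ and set d = β̂ − β₀. Let Σ̂ be a p × p positive semidefinite real matrix, λ > 0 and Λ > 0. Assume: (i) the basic inequality dᵀΣ̂d + λ‖β̂‖₁ ≤ (λ/2)‖d‖₁ + λ‖β₀‖₁ holds; (ii) the restricted eigenvalue condition holds: for every δ ∈ ℝᵖ with ‖δ_{S₀ᶜ}‖₁ ≤ 3√s₀·‖δ_{S₀}‖₂ one has δᵀΣ̂δ ≥ Λ²‖δ_{S₀}‖₂². Then ‖d_{S₀ᶜ}‖₁ ≤ 3‖d_{S₀}‖₁,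 ‖d‖₁ ≤ 2λs₀/Λ², and dᵀΣ̂d ≤ 4λ²s₀/Λ². -/
/-!
Since `β₀` vanishes off `S₀`, `‖β̂‖₁ ≥ ‖β₀‖₁ - ‖d_{S₀}‖₁ + ‖d_{S₀ᶜ}‖₁`, and the basic inequality
becomes `dᵀΣ̂d + (λ/2)‖d_{S₀ᶜ}‖₁ ≤ (3λ/2)‖d_{S₀}‖₁`; as `dᵀΣ̂d ≥ 0` this is the cone condition.
By Cauchy–Schwarz `‖d_{S₀}‖₁ ≤ √s₀ t` with `t = ‖d_{S₀}‖₂`, so the restricted eigenvalue condition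
applies to `d`: `Λ²t² ≤ dᵀΣ̂d`, while `dᵀΣ̂d + (λ/2)‖d‖₁ ≤ 2λ√s₀ t`. Both bounds follow from
`2λ√s₀ t ≤ Λ²t²/c + cλ²s₀/Λ²`, with `c = 1` for the `ℓ¹` bound and `c = 2` for the prediction bound.
-/

open Matrix

/-- The ℓ¹ norm of a vector in `ℝᵖ`. -/
noncomputable def l1Norm {p : ℕ} (v : Fin p → ℝ) : ℝ := ∑ j, |v j|

/-- The restriction of a vector to a coordinate set `T` (zeroing the others). -/
def restrictTo {p : ℕ} (v : Fin p → ℝ) (T : Finset (Fin p)) : Fin p → ℝ :=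
  fun j => if j ∈ T then v j else 0

/-- The ℓ² norm of the restriction of a vector to a coordinate set. -/
noncomputable def l2NormOn {p : ℕ} (v : Fin p → ℝ) (T : Finset (Fin p)) : ℝ :=
  Real.sqrt (∑ j ∈ T, (v j) ^ 2)

lemma mul_sub_mul_sq_le_sq_div {a t L : ℝ} (hL : 0 < L) :
    a * t - L * t ^ 2 ≤ a ^ 2 / (4 * L) := by
  rw [le_div_iff₀ (by positivity)]
  nlinarith [sq_nonneg (2 * L * t - a)]

lemma le_sq_div_of_add_le_mul_of_mul_sq_le {Q b a t L : ℝ} (hL : 0 < L) (hb : 0 ≤ b)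
    (h : Q + b ≤ a * t) (hQ : L * t ^ 2 ≤ Q) :
    b ≤ a ^ 2 / (4 * L) ∧ Q ≤ a ^ 2 / L := by
  have h₁ := mul_sub_mul_sq_le_sq_div (a := a) (t := t) hL
  have h₂ := mul_sub_mul_sq_le_sq_div (a := a) (t := t) (half_pos hL)
  have : a ^ 2 / (4 * (L / 2)) = a ^ 2 / L / 2 := by field_simp; ring
  constructor <;> linarith

section Norms

variable {p : ℕ}

lemma l1Norm_nonneg (v : Fin p → ℝ) : 0 ≤ l1Norm v :=
  Finset.sum_nonneg fun j _ => abs_nonneg (v j)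

lemma l1Norm_restrictTo (v : Fin p → ℝ) (T : Finset (Fin p)) :
    l1Norm (restrictTo v T) = ∑ j ∈ T, |v j| := by
  simp only [l1Norm, restrictTo, apply_ite, abs_zero, Finset.sum_ite_mem, Finset.univ_inter]

lemma l1Norm_eq_restrictTo_add_restrictTo_compl (v : Fin p → ℝ) (T : Finset (Fin p)) :
    l1Norm v = l1Norm (restrictTo v T) + l1Norm (restrictTo v Tᶜ) := by
  rw [l1Norm_restrictTo, l1Norm_restrictTo, Finset.sum_add_sum_compl, l1Norm]

lemma l1Norm_restrictTo_le_sqrt_card_mul_l2NormOn (v : Fin p → ℝ) (T : Finset (Fin p)) :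
    l1Norm (restrictTo v T) ≤ Real.sqrt T.card * l2NormOn v T := by
  rw [l1Norm_restrictTo, l2NormOn, ← Real.sqrt_mul (Nat.cast_nonneg _)]
  apply Real.le_sqrt_of_sq_le
  simpa only [sq_abs] using sq_sum_le_card_mul_sum_sq (s := T) (f := fun j => |v j|)

/-- On the support `S` of `β` the triangle inequality loses `‖d_S‖₁`; off it, `β + d` agrees
with `d`. -/
lemma l1Norm_sub_add_le_l1Norm_add {S : Finset (Fin p)} {β : Fin p → ℝ}
    (hβ : ∀ j ∉ S, β j = 0) (d : Fin p → ℝ) :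
    l1Norm β - l1Norm (restrictTo d S) + l1Norm (restrictTo d Sᶜ) ≤ l1Norm (β + d) := by
  have hβS : restrictTo β Sᶜ = 0 := by
    ext j
    simp only [restrictTo, Pi.zero_apply, ite_eq_right_iff, Finset.mem_compl]
    exact hβ j
  have hon : l1Norm (restrictTo β S) - l1Norm (restrictTo d S) ≤
      l1Norm (restrictTo (β + d) S) := by
    simp only [l1Norm_restrictTo, ← Finset.sum_sub_distrib, Pi.add_apply]
    gcongr with j
    simpa [abs_neg] using abs_sub_abs_le_abs_sub (β j) (-d j)
  have hoff : restrictTo (β + d) Sᶜ = restrictTo d Sᶜ := by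
    ext j
    simp only [restrictTo, Pi.add_apply]
    split_ifs with hj
    · rw [hβ j (Finset.mem_compl.mp hj), zero_add]
    · rfl
  rw [l1Norm_eq_restrictTo_add_restrictTo_compl β S,
    l1Norm_eq_restrictTo_add_restrictTo_compl (β + d) S, hβS, hoff]
  have hzero : l1Norm (0 : Fin p → ℝ) = 0 := by simp [l1Norm]
  linarith

lemma add_half_mul_l1Norm_compl_le_of_basic_inequality {S : Finset (Fin p)} {β : Fin p → ℝ}
    (hβ : ∀ j ∉ S, β j = 0) (d : Fin p → ℝ) {Q lam : ℝ} (hlam : 0 ≤ lam)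
    (h : Q + lam * l1Norm (β + d) ≤ lam / 2 * l1Norm d + lam * l1Norm β) :
    Q + lam / 2 * l1Norm (restrictTo d Sᶜ) ≤ 3 * lam / 2 * l1Norm (restrictTo d S) := by
  rw [l1Norm_eq_restrictTo_add_restrictTo_compl d S] at h
  nlinarith [mul_le_mul_of_nonneg_left (l1Norm_sub_add_le_l1Norm_add hβ d) hlam]

end Norms

theorem lasso_oracle_bound_general
    {p : ℕ} (S₀ : Finset (Fin p)) (s₀ : ℕ) (hs₀ : S₀.card = s₀)
    (β₀ : Fin p → ℝ) (hβ₀supp : ∀ j ∉ S₀, β₀ j = 0)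
    (βhat : Fin p → ℝ) (d : Fin p → ℝ) (hd : d = βhat - β₀)
    (Sighat : Matrix (Fin p) (Fin p) ℝ) (hPSD : Sighat.PosSemidef)
    (lam Λ : ℝ) (hlam : 0 < lam) (hΛ : 0 < Λ)
    -- (i) basic inequality
    (hbasic : d ⬝ᵥ Sighat.mulVec d + lam * l1Norm βhat ≤
      lam / 2 * l1Norm d + lam * l1Norm β₀)
    -- (ii) restricted eigenvalue condition
    (hRE : ∀ δ : Fin p → ℝ,
      l1Norm (restrictTo δ S₀ᶜ) ≤ 3 * Real.sqrt s₀ * l2NormOn δ S₀ →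
      Λ ^ 2 * (l2NormOn δ S₀) ^ 2 ≤ δ ⬝ᵥ Sighat.mulVec δ) :
    l1Norm (restrictTo d S₀ᶜ) ≤ 3 * l1Norm (restrictTo d S₀) ∧
      l1Norm d ≤ 2 * lam * s₀ / Λ ^ 2 ∧
      d ⬝ᵥ Sighat.mulVec d ≤ 4 * lam ^ 2 * s₀ / Λ ^ 2 := by
  have hQ : 0 ≤ d ⬝ᵥ Sighat.mulVec d := hPSD.dotProduct_mulVec_nonneg d
  rw [eq_sub_iff_add_eq', eq_comm] at hd
  subst hd
  have hrestricted := add_half_mul_l1Norm_compl_le_of_basic_inequality hβ₀supp d hlam.le hbasic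
  have hcone : l1Norm (restrictTo d S₀ᶜ) ≤ 3 * l1Norm (restrictTo d S₀) :=
    le_of_mul_le_mul_left (by linarith) (half_pos hlam)
  have hCS := l1Norm_restrictTo_le_sqrt_card_mul_l2NormOn d S₀
  rw [hs₀] at hCS
  have hREd := hRE d (by linarith)
  have hcross : d ⬝ᵥ Sighat.mulVec d + lam / 2 * l1Norm d ≤
      2 * lam * Real.sqrt s₀ * l2NormOn d S₀ := by
    have := mul_le_mul_of_nonneg_left hCS (by positivity : 0 ≤ 2 * lam)
    rw [l1Norm_eq_restrictTo_add_restrictTo_compl d S₀]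
    linarith
  obtain ⟨hl1, hpred⟩ := le_sq_div_of_add_le_mul_of_mul_sq_le (pow_pos hΛ 2)
    (mul_nonneg (half_pos hlam).le (l1Norm_nonneg d)) hcross hREd
  have hsq : (2 * lam * Real.sqrt s₀) ^ 2 = 4 * lam ^ 2 * s₀ := by
    rw [mul_pow, Real.sq_sqrt (Nat.cast_nonneg _)]; ring
  rw [hsq] at hl1 hpred
  refine ⟨hcone, le_of_mul_le_mul_left (hl1.trans_eq ?_) (half_pos hlam), hpred⟩
  field_simp

/-- Deterministic Lasso oracle bound: under the basic inequality and the
restricted eigenvalue condition, the Lasso error `d = β̂ − β₀` lies in the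
restricted cone and satisfies `‖d‖₁ ≤ 2λs₀/Λ²` and `dᵀΣ̂d ≤ 4λ²s₀/Λ²`. -/
theorem lasso_oracle_bound
    {p : ℕ} (hp : 1 ≤ p) (S₀ : Finset (Fin p)) (s₀ : ℕ) (hs₀ : S₀.card = s₀)
    (hs₀1 : 1 ≤ s₀)
    (β₀ : Fin p → ℝ) (hβ₀supp : ∀ j ∉ S₀, β₀ j = 0)
    (βhat : Fin p → ℝ) (d : Fin p → ℝ) (hd : d = βhat - β₀)
    (Sighat : Matrix (Fin p) (Fin p) ℝ) (hPSD : Sighat.PosSemidef)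
    (lam Λ : ℝ) (hlam : 0 < lam) (hΛ : 0 < Λ)
    -- (i) basic inequality
    (hbasic : d ⬝ᵥ Sighat.mulVec d + lam * l1Norm βhat ≤
      lam / 2 * l1Norm d + lam * l1Norm β₀)
    -- (ii) restricted eigenvalue condition
    (hRE : ∀ δ : Fin p → ℝ,
      l1Norm (restrictTo δ S₀ᶜ) ≤ 3 * Real.sqrt s₀ * l2NormOn δ S₀ →
      Λ ^ 2 * (l2NormOn δ S₀) ^ 2 ≤ δ ⬝ᵥ Sighat.mulVec δ) :
    l1Norm (restrictTo d S₀ᶜ) ≤ 3 * l1Norm (restrictTo d S₀) ∧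
      l1Norm d ≤ 2 * lam * s₀ / Λ ^ 2 ∧
      d ⬝ᵥ Sighat.mulVec d ≤ 4 * lam ^ 2 * s₀ / Λ ^ 2 :=
  lasso_oracle_bound_general S₀ s₀ hs₀ β₀ hβ₀supp βhat d hd Sighat hPSD lam Λ hlam hΛ hbasic hRE
end

section
/- (Restricted eigenvalue stability under entrywise perturbation.) Let Σ̂ and Σ be symmetric p × p real matrices, S₀ ⊆ {1,…,p} with |S₀| = s₀ ≥ 1, and let Λ² ≥ 0 satisfy δᵀΣδ ≥ Λ²‖δ_{S₀}‖₂² for every δ ∈ ℝᵖ with ‖δ_{S₀ᶜ}‖₁ ≤ 3√s₀·‖δ_{S₀}‖₂. Then for every such δ, δᵀΣ̂δ ≥ (Λ² − 16·s₀·max_{j,k}|Σ̂_{jk} − Σ_{jk}|)·‖δ_{S₀}‖₂². -/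
open Matrix

/-- The entrywise max norm of a `p × p` matrix. -/
noncomputable def maxEntry {p : ℕ} (A : Matrix (Fin p) (Fin p) ℝ) : ℝ :=
  ⨆ j, ⨆ k, |A j k|

/-- Restricted eigenvalue stability under entrywise perturbation: if the
restricted eigenvalue condition holds for `Σ` with constant `Λ²`, it holds for
`Σ̂` with constant `Λ² − 16·s₀·‖Σ̂ − Σ‖_max` on the restricted cone. -/
theorem restricted_eigenvalue_stability
    {p : ℕ} (hp : 1 ≤ p)
    (Sighat Sig : Matrix (Fin p) (Fin p) ℝ)
    (hSighat : Sighat.IsSymm) (hSig : Sig.IsSymm)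
    (S₀ : Finset (Fin p)) (s₀ : ℕ) (hs₀ : S₀.card = s₀) (hs₀1 : 1 ≤ s₀)
    (Λsq : ℝ) (hΛsq : 0 ≤ Λsq)
    (hRE : ∀ δ : Fin p → ℝ,
      l1Norm (restrictTo δ S₀ᶜ) ≤ 3 * Real.sqrt s₀ * l2NormOn δ S₀ →
      Λsq * (l2NormOn δ S₀) ^ 2 ≤ δ ⬝ᵥ Sig.mulVec δ) :
    ∀ δ : Fin p → ℝ,
      l1Norm (restrictTo δ S₀ᶜ) ≤ 3 * Real.sqrt s₀ * l2NormOn δ S₀ →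
      (Λsq - 16 * s₀ * maxEntry (Sighat - Sig)) * (l2NormOn δ S₀) ^ 2 ≤
        δ ⬝ᵥ Sighat.mulVec δ := by
  intro δ hcone
  set E := Sighat - Sig with hE
  set M := maxEntry E with hM
  set a := l2NormOn δ S₀ with ha
  have ha0 : 0 ≤ a := Real.sqrt_nonneg _
  have ha2 : a ^ 2 = ∑ j ∈ S₀, (δ j) ^ 2 := by
    rw [ha, l2NormOn, Real.sq_sqrt (Finset.sum_nonneg fun j _ => sq_nonneg _)]
  have hMle : ∀ j k, |E j k| ≤ M := by
    intro j k
    have h1 : |E j k| ≤ ⨆ k, |E j k| :=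
      le_ciSup (f := fun k => |E j k|) (Set.Finite.bddAbove (Set.finite_range _)) k
    have h2 : (⨆ k, |E j k|) ≤ ⨆ j, ⨆ k, |E j k| :=
      le_ciSup (f := fun j => ⨆ k, |E j k|) (Set.Finite.bddAbove (Set.finite_range _)) j
    exact le_trans h1 (le_trans h2 (le_of_eq rfl))
  have hM0 : 0 ≤ M := by
    obtain ⟨j⟩ := Fin.pos_iff_nonempty.mp hp
    exact le_trans (abs_nonneg _) (hMle j j)
  -- ℓ¹ pieces
  set L1 : ℝ := ∑ j, |δ j| with hL1def
  have hL10 : 0 ≤ L1 := Finset.sum_nonneg fun j _ => abs_nonneg _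
  have hrest : l1Norm (restrictTo δ S₀ᶜ) = ∑ j ∈ S₀ᶜ, |δ j| := by
    rw [l1Norm]
    rw [show (∑ j, |restrictTo δ S₀ᶜ j|) = ∑ j, if j ∈ S₀ᶜ then |δ j| else 0 by
      refine Finset.sum_congr rfl fun j _ => ?_
      simp only [restrictTo]; split <;> simp]
    rw [Finset.sum_ite_mem, Finset.univ_inter]
  -- Cauchy–Schwarz on S₀
  have hCS : ∑ j ∈ S₀, |δ j| ≤ Real.sqrt s₀ * a := by
    have h1 : (∑ j ∈ S₀, |δ j|) ^ 2 ≤ (s₀ : ℝ) * a ^ 2 := by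
      have key := sq_sum_le_card_mul_sum_sq (s := S₀) (f := fun j => |δ j|)
      simp only [sq_abs] at key
      rw [ha2, ← hs₀]
      exact_mod_cast key
    have h2 : (0:ℝ) ≤ Real.sqrt s₀ * a := mul_nonneg (Real.sqrt_nonneg _) ha0
    nlinarith [Finset.sum_nonneg (fun j (_ : j ∈ S₀) => abs_nonneg (δ j)),
      Real.sq_sqrt (Nat.cast_nonneg s₀ : (0:ℝ) ≤ s₀)]
  have hL1 : L1 ≤ 4 * Real.sqrt s₀ * a := by
    have hsplit : L1 = ∑ j ∈ S₀, |δ j| + ∑ j ∈ S₀ᶜ, |δ j| :=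
      (Finset.sum_add_sum_compl S₀ _).symm
    rw [hrest] at hcone
    rw [hsplit]; linarith
  -- quadratic form bound
  have hq : |δ ⬝ᵥ E.mulVec δ| ≤ M * L1 ^ 2 := by
    have hinner : ∀ j, |∑ k, E j k * δ k| ≤ ∑ k, M * |δ k| := by
      intro j
      refine le_trans (Finset.abs_sum_le_sum_abs _ _) (Finset.sum_le_sum fun k _ => ?_)
      rw [abs_mul]
      exact mul_le_mul_of_nonneg_right (hMle j k) (abs_nonneg _)
    have : |δ ⬝ᵥ E.mulVec δ| ≤ ∑ j, |δ j| * (M * L1) := by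
      calc |δ ⬝ᵥ E.mulVec δ| = |∑ j, δ j * ∑ k, E j k * δ k| := by
            simp [dotProduct, Matrix.mulVec]
        _ ≤ ∑ j, |δ j * ∑ k, E j k * δ k| := Finset.abs_sum_le_sum_abs _ _
        _ = ∑ j, |δ j| * |∑ k, E j k * δ k| := by simp [abs_mul]
        _ ≤ ∑ j, |δ j| * (M * L1) := by
            refine Finset.sum_le_sum fun j _ => mul_le_mul_of_nonneg_left ?_ (abs_nonneg _)
            calc |∑ k, E j k * δ k| ≤ ∑ k, M * |δ k| := hinner j
              _ = M * L1 := by rw [← Finset.mul_sum]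
    calc |δ ⬝ᵥ E.mulVec δ| ≤ ∑ j, |δ j| * (M * L1) := this
      _ = L1 * (M * L1) := by rw [← Finset.sum_mul]
      _ = M * L1 ^ 2 := by ring
  have hq2 : |δ ⬝ᵥ E.mulVec δ| ≤ 16 * s₀ * M * a ^ 2 := by
    have hsq : L1 ^ 2 ≤ 16 * s₀ * a ^ 2 := by
      have h4 : (4 * Real.sqrt s₀ * a) ^ 2 = 16 * s₀ * a ^ 2 := by
        have := Real.sq_sqrt (Nat.cast_nonneg s₀ : (0:ℝ) ≤ s₀)
        nlinarith [this]
      nlinarith [hL1, hL10, mul_nonneg (mul_nonneg (by norm_num : (0:ℝ) ≤ 4) (Real.sqrt_nonneg (s₀:ℝ))) ha0]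
    calc |δ ⬝ᵥ E.mulVec δ| ≤ M * L1 ^ 2 := hq
      _ ≤ M * (16 * s₀ * a ^ 2) := mul_le_mul_of_nonneg_left hsq hM0
      _ = 16 * s₀ * M * a ^ 2 := by ring
  have hdecomp : δ ⬝ᵥ Sighat.mulVec δ = δ ⬝ᵥ Sig.mulVec δ + δ ⬝ᵥ E.mulVec δ := by
    rw [hE, Matrix.sub_mulVec, dotProduct_sub]; ring
  have hre := hRE δ hcone
  have habs := abs_le.mp hq2
  rw [hdecomp]
  nlinarith [habs.1]
end
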